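/- arXiv:2605.01375 — 5 statements merged into one kernel-verified Lean document; each statement's English description precedes it below -/
import Mathlib

section
/- Let d ≥ 2 and let k ≥ 2 be an integer with 1/k ≤ P ≤ 1/(k-1). Set λ_k = 1/k − √((1 − 1/k)(P − 1/k)) and λ₁ = (1 − λ_k)/(k − 1). Then for every probability vector (p₁,…,p_d) (p_i ≥ 0, Σ p_i = 1) with Σ p_i² = P, the Shannon entropy satisfies −Σ_i p_i ln p_i ≥ −[(1 − λ_k) ln λ₁ + λ_k ln λ_k]. -/
/-!
The entropy is smallest, i.e. `∑ pᵢ log pᵢ` is largest, at some point `q` of the compact slice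
of the simplex at purity `P`. At a maximiser no three coordinates satisfy `0 < q l ≤ q j < q i`:
rotating such a triple about the axis `(1, 1, 1)` preserves its sum and its sum of squares, and
by strict concavity of `log` it strictly increases `x log x + y log y + z log z` for small
positive angles. Hence the nonzero coordinates of `q` are `m` copies of its maximum `a` and at
most one smaller value `b`. The two constraints `m a + b = 1`, `m a² + b² = P` force
`1/(m+1) ≤ P ≤ 1/m`, so `m = k - 1` except at the endpoints `P = 1/(k-1)` and `P = 1/k`, where
the same vector can be written with `k - 1` copies. With `k - 1` copies `b` is the smaller root
of a quadratic, namely `λ_k`, and `a = λ₁`.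
-/

open Real Finset Function Filter Topology

theorem StrictConcaveOn.sub_mul_add_sub_mul_lt {s : Set ℝ} {f : ℝ → ℝ}
    (hf : StrictConcaveOn ℝ s f) {x y z : ℝ} (hx : x ∈ s) (hz : z ∈ s) (hxy : x < y)
    (hyz : y < z) : (z - y) * f x + (y - x) * f z < (z - x) * f y := by
  have h := hf.slope_anti_adjacent hx hz hxy hyz
  rw [div_lt_div_iff₀ (sub_pos.2 hyz) (sub_pos.2 hxy)] at h
  linear_combination h

/-- `(axisRot θ x y z, axisRot θ y z x, axisRot θ z x y)` is the rotation of `(x, y, z)` by the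
angle `θ` about the axis `(1, 1, 1)`. -/
noncomputable def axisRot (θ x y z : ℝ) : ℝ :=
  (x + y + z) / 3 + cos θ * (x - (x + y + z) / 3) + sin θ * (z - y) / √3

@[simp]
theorem axisRot_zero (x y z : ℝ) : axisRot 0 x y z = x := by
  simp only [axisRot, cos_zero, sin_zero]; ring

theorem axisRot_add_add (θ x y z : ℝ) :
    axisRot θ x y z + axisRot θ y z x + axisRot θ z x y = x + y + z := by
  unfold axisRot; ring

theorem axisRot_sq_add_sq_add_sq (θ x y z : ℝ) :
    axisRot θ x y z ^ 2 + axisRot θ y z x ^ 2 + axisRot θ z x y ^ 2 = x ^ 2 + y ^ 2 + z ^ 2 := by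
  have hu : (√3)⁻¹ ^ 2 = 1 / 3 := by rw [inv_pow, sq_sqrt (by norm_num)]; norm_num
  simp only [axisRot, div_eq_mul_inv _ √3]
  linear_combination (x ^ 2 + y ^ 2 + z ^ 2 - (x + y + z) ^ 2 / 3) *
    (sin_sq_add_cos_sq θ + 3 * sin θ ^ 2 * hu)

@[fun_prop]
theorem continuous_axisRot (x y z : ℝ) : Continuous fun θ ↦ axisRot θ x y z := by
  unfold axisRot; fun_prop

theorem hasDerivAt_axisRot (θ x y z : ℝ) :
    HasDerivAt (fun θ ↦ axisRot θ x y z) ((axisRot θ z x y - axisRot θ y z x) / √3) θ := by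
  have hu : (√3)⁻¹ ^ 2 = 1 / 3 := by rw [inv_pow, sq_sqrt (by norm_num)]; norm_num
  have h := (((hasDerivAt_cos θ).mul_const (x - (x + y + z) / 3)).const_add ((x + y + z) / 3)).add
    (((hasDerivAt_sin θ).mul_const (z - y)).div_const √3)
  refine HasDerivAt.congr_deriv (f := fun θ ↦ axisRot θ x y z) h ?_
  simp only [axisRot, div_eq_mul_inv _ √3]
  linear_combination sin θ * (2 * x - y - z) * hu

theorem eventually_axisRot_lt {x y z : ℝ} (hz : 0 < z) (hzy : z ≤ y) (hyx : y < x) :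
    ∀ᶠ θ in 𝓝[>] 0, 0 < axisRot θ z x y ∧ axisRot θ z x y < axisRot θ y z x ∧
      axisRot θ y z x < axisRot θ x y z := by
  have h₃ : ∀ᶠ θ in 𝓝 0, 0 < axisRot θ z x y :=
    continuousAt_const.eventually_lt (continuous_axisRot z x y).continuousAt (by simpa using hz)
  have h₁₂ : ∀ᶠ θ in 𝓝 0, axisRot θ y z x < axisRot θ x y z :=
    (continuous_axisRot y z x).continuousAt.eventually_lt (continuous_axisRot x y z).continuousAt
      (by simpa using hyx)
  -- `y = z` is allowed, so this one only holds for `θ > 0`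
  have h₂₃ : ∀ᶠ θ in 𝓝[>] 0, axisRot θ z x y < axisRot θ y z x := by
    filter_upwards [Ioo_mem_nhdsGT (by positivity : (0 : ℝ) < π / 2)] with θ hθ
    have hcos : 0 < cos θ := cos_pos_of_mem_Ioo ⟨by linarith [hθ.1, pi_pos], hθ.2⟩
    have hsin : 0 < sin θ := sin_pos_of_pos_of_lt_pi hθ.1 (by linarith [hθ.2, pi_pos])
    have hdiff : axisRot θ y z x - axisRot θ z x y =
        cos θ * (y - z) + sin θ * (2 * x - y - z) / √3 := by
      simp only [axisRot]; ring
    have := mul_nonneg hcos.le (sub_nonneg.2 hzy)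
    have := div_pos (mul_pos hsin (by linarith : 0 < 2 * x - y - z)) (sqrt_pos.2 three_pos)
    linarith
  filter_upwards [nhdsWithin_le_nhds h₃, h₂₃, nhdsWithin_le_nhds h₁₂] with θ h₃ h₂₃ h₁₂
  exact ⟨h₃, h₂₃, h₁₂⟩

theorem exists_add_add_mul_log_lt {x y z : ℝ} (hz : 0 < z) (hzy : z ≤ y) (hyx : y < x) :
    ∃ a b c : ℝ, 0 < a ∧ 0 < b ∧ 0 < c ∧ a + b + c = x + y + z ∧
      a ^ 2 + b ^ 2 + c ^ 2 = x ^ 2 + y ^ 2 + z ^ 2 ∧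
      x * log x + y * log y + z * log z < a * log a + b * log b + c * log c := by
  set g₁ := fun θ ↦ axisRot θ x y z
  set g₂ := fun θ ↦ axisRot θ y z x
  set g₃ := fun θ ↦ axisRot θ z x y
  set E := fun θ ↦ g₁ θ * log (g₁ θ) + g₂ θ * log (g₂ θ) + g₃ θ * log (g₃ θ)
  obtain ⟨ε, hε, hord⟩ := mem_nhdsGT_iff_exists_Ioo_subset.1 (eventually_axisRot_lt hz hzy hyx)
  -- the `+ 1` in `(x log x)' = log x + 1` drops out because the rotation preserves the sum
  have hmono : StrictMonoOn E (Set.Icc 0 ε) := by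
    refine strictMonoOn_of_hasDerivWithinAt_pos (convex_Icc 0 ε) (by fun_prop)
      (f' := fun θ ↦ ((g₃ θ - g₂ θ) * log (g₁ θ) + (g₁ θ - g₃ θ) * log (g₂ θ) +
        (g₂ θ - g₁ θ) * log (g₃ θ)) / √3) (fun θ hθ ↦ ?_) (fun θ hθ ↦ ?_) <;>
      rw [interior_Icc] at hθ <;> obtain ⟨h₃, h₃₂, h₂₁⟩ := hord hθ
    · have d₁ := (hasDerivAt_mul_log (by linarith : g₁ θ ≠ 0)).comp θ (hasDerivAt_axisRot θ x y z)
      have d₂ := (hasDerivAt_mul_log (by linarith : g₂ θ ≠ 0)).comp θ (hasDerivAt_axisRot θ y z x)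
      have d₃ := (hasDerivAt_mul_log h₃.ne').comp θ (hasDerivAt_axisRot θ z x y)
      refine HasDerivAt.hasDerivWithinAt (((d₁.add d₂).add d₃).congr_deriv ?_)
      ring
    · have := strictConcaveOn_log_Ioi.sub_mul_add_sub_mul_lt h₃ (lt_trans h₃ (h₃₂.trans h₂₁))
        h₃₂ h₂₁
      exact div_pos (by linarith) (sqrt_pos.2 (by norm_num))
  obtain ⟨h₃, h₃₂, h₂₁⟩ := hord ⟨half_pos hε, half_lt_self hε⟩
  refine ⟨g₁ (ε / 2), g₂ (ε / 2), g₃ (ε / 2), by linarith, by linarith, h₃,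
    axisRot_add_add .., axisRot_sq_add_sq_add_sq .., ?_⟩
  simpa [E, g₁, g₂, g₃] using
    hmono (Set.left_mem_Icc.2 hε.le) ⟨(half_pos hε).le, (half_lt_self hε).le⟩ (half_pos hε)

theorem Fintype.sum_comp_update_add {ι α M : Type*} [Fintype ι] [DecidableEq ι] [AddCommMonoid M]
    (F : α → M) (f : ι → α) (i : ι) (b : α) :
    ∑ t, F (update f i b t) + F (f i) = ∑ t, F (f t) + F b := by
  have hrest : ∑ t ∈ univ.erase i, F (update f i b t) = ∑ t ∈ univ.erase i, F (f t) :=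
    Finset.sum_congr rfl fun t ht ↦ by rw [update_of_ne (ne_of_mem_erase ht)]
  rw [← add_sum_erase _ _ (mem_univ i), ← add_sum_erase _ (fun t ↦ F (f t)) (mem_univ i),
    update_self, hrest]
  abel

theorem Finset.exists_forall_sum_comp_eq {ι M N : Type*} [Zero M] [AddCommMonoid N]
    {s : Finset ι} {f : ι → M} (h : ∀ i ∈ s, ∀ j ∈ s, f i ≠ 0 → f j ≠ 0 → i = j) :
    ∃ x, (x = 0 ∨ ∃ i ∈ s, f i = x) ∧ ∀ F : M → N, F 0 = 0 → ∑ i ∈ s, F (f i) = F x := by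
  by_cases hs : ∃ i ∈ s, f i ≠ 0
  · obtain ⟨i, hi, hfi⟩ := hs
    refine ⟨f i, .inr ⟨i, hi, rfl⟩, fun F hF ↦ sum_eq_single_of_mem i hi fun j hj hji ↦ ?_⟩
    rw [not_imp_comm.1 (h j hj i hi · hfi) hji, hF]
  · push Not at hs
    exact ⟨0, .inl rfl, fun F hF ↦ hF ▸ sum_eq_zero fun i hi ↦ by rw [hs i hi, hF]⟩

section

variable {ι : Type*} [Fintype ι]

def puritySlice (ι : Type*) [Fintype ι] (P : ℝ) : Set (ι → ℝ) :=
  stdSimplex ℝ ι ∩ {v | ∑ i, v i ^ 2 = P}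

theorem isCompact_puritySlice (P : ℝ) : IsCompact (puritySlice ι P) :=
  (isCompact_stdSimplex ℝ ι).inter_right (isClosed_eq (by fun_prop) continuous_const)

theorem not_isMaxOn_sum_mul_log [DecidableEq ι] {P : ℝ} {q : ι → ℝ} (hq : q ∈ puritySlice ι P)
    {i j l : ι} (hjl : j ≠ l) (hl : 0 < q l) (hlj : q l ≤ q j) (hji : q j < q i) :
    ¬ IsMaxOn (fun v : ι → ℝ ↦ ∑ t, v t * log (v t)) (puritySlice ι P) q := by
  intro hmax
  obtain ⟨a, b, c, ha, hb, hc, hsum, hsq, hlt⟩ := exists_add_add_mul_log_lt hl hlj hji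
  have hij : i ≠ j := by rintro rfl; exact hji.false
  have hil : i ≠ l := by rintro rfl; exact (hlj.trans_lt hji).false
  set q' := update (update (update q i a) j b) l c
  have hsum' (F : ℝ → ℝ) :
      ∑ t, F (q' t) + (F (q i) + F (q j) + F (q l)) = ∑ t, F (q t) + (F a + F b + F c) := by
    have e₁ := Fintype.sum_comp_update_add F (update (update q i a) j b) l c
    have e₂ := Fintype.sum_comp_update_add F (update q i a) j b
    have e₃ := Fintype.sum_comp_update_add F q i a
    rw [update_of_ne hjl.symm, update_of_ne hil.symm] at e₁
    rw [update_of_ne hij.symm] at e₂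
    linear_combination e₁ + e₂ + e₃
  have h₁ := hsum' fun x ↦ x
  have h₂ := hsum' (· ^ 2)
  have h₃ := hsum' fun x ↦ x * log x
  beta_reduce at h₁ h₂ h₃
  have hq' : q' ∈ puritySlice ι P := by
    refine ⟨⟨fun t ↦ ?_, ?_⟩, ?_⟩
    · simp only [q', update_apply]
      split_ifs <;> first | positivity | exact hq.1.1 t
    · linear_combination h₁ + hq.1.2 + hsum
    · have hqP : ∑ t, q t ^ 2 = P := hq.2
      show ∑ t, q' t ^ 2 = P
      linear_combination h₂ + hqP + hsq
  linarith [isMaxOn_iff.1 hmax q' hq']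

theorem exists_forall_sum_comp_eq_of_forall_not_lt {q : ι → ℝ} (hq : q ∈ stdSimplex ℝ ι)
    (h : ∀ i j l, j ≠ l → 0 < q l → q l ≤ q j → ¬ q j < q i) :
    ∃ (m : ℕ) (a b : ℝ), 1 ≤ m ∧ 0 ≤ b ∧ b ≤ a ∧
      ∀ F : ℝ → ℝ, F 0 = 0 → ∑ t, F (q t) = m * F a + F b := by
  classical
  have : Nonempty ι := by
    by_contra hι
    simpa [not_nonempty_iff.1 hι] using hq.2
  obtain ⟨i₀, hi₀⟩ := Finite.exists_max q
  set R : Finset ι := {t | q t ≠ q i₀}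
  have hR : ∀ t₁ ∈ R, ∀ t₂ ∈ R, q t₁ ≠ 0 → q t₂ ≠ 0 → t₁ = t₂ := by
    intro t₁ ht₁ t₂ ht₂ h₁ h₂
    by_contra hne
    have hlt₁ := lt_of_le_of_ne (hi₀ t₁) (mem_filter.1 ht₁).2
    have hlt₂ := lt_of_le_of_ne (hi₀ t₂) (mem_filter.1 ht₂).2
    rcases le_total (q t₂) (q t₁) with hle | hle
    · exact h i₀ t₁ t₂ hne (lt_of_le_of_ne (hq.1 t₂) h₂.symm) hle hlt₁
    · exact h i₀ t₂ t₁ (Ne.symm hne) (lt_of_le_of_ne (hq.1 t₁) h₁.symm) hle hlt₂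
  obtain ⟨b, hb, hsum⟩ := exists_forall_sum_comp_eq (N := ℝ) hR
  have hb₀ : 0 ≤ b ∧ b ≤ q i₀ := by
    rcases hb with rfl | ⟨t, -, rfl⟩
    · exact ⟨le_rfl, hq.1 i₀⟩
    · exact ⟨hq.1 t, hi₀ t⟩
  refine ⟨#{t | q t = q i₀}, q i₀, b, card_pos.2 ⟨i₀, by simp⟩, hb₀.1, hb₀.2, fun F hF ↦ ?_⟩
  rw [← sum_filter_add_sum_filter_not univ (q · = q i₀), hsum F hF,
    Finset.sum_congr rfl fun t ht ↦ by rw [(mem_filter.1 ht).2], sum_const, nsmul_eq_mul]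

end

theorem eq_one_div_sub_sqrt_of_sub_one_mul_add_eq {K a b P : ℝ} (hK : 1 < K) (hba : b ≤ a)
    (h₁ : (K - 1) * a + b = 1) (h₂ : (K - 1) * a ^ 2 + b ^ 2 = P) :
    b = 1 / K - √((1 - 1 / K) * (P - 1 / K)) := by
  have hKb : 0 ≤ 1 - K * b := by nlinarith
  have hdisc : (1 - K * b) ^ 2 = (K - 1) * (K * P - 1) := by
    linear_combination K * (K - 1) * h₂ - K * ((K - 1) * a + 1 - b) * h₁
  have harg : (1 - 1 / K) * (P - 1 / K) = ((1 - K * b) / K) ^ 2 := by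
    rw [div_pow, hdisc]
    field_simp
  rw [harg, sqrt_sq (div_nonneg hKb (by linarith))]
  field_simp
  ring

theorem exists_sub_one_mul_add_eq {k m : ℕ} (hk : 2 ≤ k) (hm : 1 ≤ m) {P a b : ℝ}
    (hPlow : 1 / (k : ℝ) ≤ P) (hPhigh : P ≤ 1 / ((k : ℝ) - 1)) (hb : 0 ≤ b) (hba : b ≤ a)
    (h₁ : m * a + b = 1) (h₂ : m * a ^ 2 + b ^ 2 = P) :
    ∃ a' b', b' ≤ a' ∧ ((k : ℝ) - 1) * a' + b' = 1 ∧
      ((k : ℝ) - 1) * a' ^ 2 + b' ^ 2 = P ∧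
      m * (a * log a) + b * log b = ((k : ℝ) - 1) * (a' * log a') + b' * log b' := by
  have hmP : 1 - m * P = b * (m * (a - b) + 1) := by
    linear_combination m * h₂ - (1 + m * a) * h₁
  have hm1P : (m + 1) * P - 1 = m * (a - b) ^ 2 := by
    linear_combination (-(m + 1)) * h₂ + (m * a + b + 1) * h₁
  have hmab : 0 < (m : ℝ) * (a - b) + 1 := by
    have : (0 : ℝ) ≤ m := m.cast_nonneg
    nlinarith
  have hk' : (2 : ℝ) ≤ k := by exact_mod_cast hk
  have hkP : 1 ≤ k * P := by
    rw [div_le_iff₀ (by positivity)] at hPlow; linarith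
  have hkP' : (k - 1) * P ≤ 1 := by
    rw [le_div_iff₀ (by linarith)] at hPhigh; linarith
  have hP : 0 < P := by nlinarith
  have hmk : m ≤ k := by
    exact_mod_cast (le_of_mul_le_mul_right (by nlinarith) hP : (m : ℝ) ≤ k)
  have hkm : k ≤ m + 2 := by
    have : (k : ℝ) - 1 ≤ m + 1 := le_of_mul_le_mul_right (by nlinarith) hP
    have : (k : ℝ) ≤ m + 2 := by linarith
    exact_mod_cast this
  obtain rfl | rfl | rfl : k = m + 2 ∨ k = m + 1 ∨ k = m := by omega
  · have hab : a = b := by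
      have : (m : ℝ) * (a - b) ^ 2 ≤ 0 := by push_cast at hkP'; linarith
      have : (a - b) ^ 2 ≤ 0 := nonpos_of_mul_nonpos_right this (by exact_mod_cast hm)
      nlinarith
    subst hab
    refine ⟨a, 0, hb, ?_, ?_, ?_⟩ <;> push_cast
    · linear_combination h₁
    · linear_combination h₂
    · simp only [zero_mul, add_zero]; ring
  · refine ⟨a, b, hba, ?_, ?_, ?_⟩ <;> push_cast <;> simp only [add_sub_cancel_right]
    · exact h₁
    · exact h₂
  · have hb0 : b = 0 := by nlinarith
    subst hb0
    refine ⟨a, a, le_rfl, ?_, ?_, ?_⟩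
    · linear_combination h₁
    · linear_combination h₂
    · simp only [zero_mul, add_zero]; ring

theorem entropy_lower_bound_at_fixed_purity_general
    (d k : ℕ) (hk : 2 ≤ k) (P : ℝ)
    (hPlow : 1 / (k : ℝ) ≤ P) (hPhigh : P ≤ 1 / ((k : ℝ) - 1))
    (lamk lam1 : ℝ)
    (hlamk : lamk = 1 / (k : ℝ) - Real.sqrt ((1 - 1 / (k : ℝ)) * (P - 1 / (k : ℝ))))
    (hlam1 : lam1 = (1 - lamk) / ((k : ℝ) - 1))
    (p : Fin d → ℝ) (hp0 : ∀ i, 0 ≤ p i) (hpsum : ∑ i, p i = 1)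
    (hpur : ∑ i, (p i) ^ 2 = P) :
    -(∑ i, p i * Real.log (p i)) ≥
      -((1 - lamk) * Real.log lam1 + lamk * Real.log lamk) := by
  have hk' : (1 : ℝ) < k := by exact_mod_cast hk
  have hp : p ∈ puritySlice (Fin d) P := ⟨⟨hp0, hpsum⟩, hpur⟩
  obtain ⟨q, hq, hqmax⟩ := (isCompact_puritySlice P).exists_isMaxOn ⟨p, hp⟩
    (continuous_finsetSum _ fun i _ ↦ (continuous_apply i).mul_log).continuousOn
  obtain ⟨m, a, b, hm, hb, hba, hsum⟩ := exists_forall_sum_comp_eq_of_forall_not_lt hq.1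
    fun i j l hjl hl hlj hji ↦ not_isMaxOn_sum_mul_log hq hjl hl hlj hji hqmax
  have h₁ := hsum (fun x ↦ x) rfl
  have h₂ := hsum (· ^ 2) (zero_pow two_ne_zero)
  have h₃ := hsum (fun x ↦ x * log x) (zero_mul _)
  beta_reduce at h₁ h₂ h₃
  obtain ⟨a', b', hba', h₁', h₂', hval⟩ := exists_sub_one_mul_add_eq hk hm hPlow hPhigh hb hba
    (h₁.symm.trans hq.1.2) (h₂.symm.trans hq.2)
  have hb' : b' = lamk := hlamk ▸ eq_one_div_sub_sqrt_of_sub_one_mul_add_eq hk' hba' h₁' h₂'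
  have ha' : a' = lam1 := by rw [hlam1, ← hb', eq_div_iff (by linarith)]; linarith
  rw [ge_iff_le, neg_le_neg_iff]
  calc ∑ i, p i * log (p i) ≤ ∑ i, q i * log (q i) := isMaxOn_iff.1 hqmax p hp
    _ = ((k : ℝ) - 1) * (a' * log a') + b' * log b' := h₃.trans hval
    _ = (1 - lamk) * log lam1 + lamk * log lamk := by
      rw [← hb', ← ha']; linear_combination log a' * h₁'

/-- For every probability vector `p` in dimension `d ≥ 2` with purity
`∑ pᵢ² = P`, where `1/k ≤ P ≤ 1/(k−1)` for an integer `k ≥ 2`, the Shannon entropy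
`−∑ pᵢ ln pᵢ` is at least `−[(1 − λ_k) ln λ₁ + λ_k ln λ_k]`, with
`λ_k = 1/k − √((1 − 1/k)(P − 1/k))` and `λ₁ = (1 − λ_k)/(k − 1)`. -/
theorem entropy_lower_bound_at_fixed_purity
    (d k : ℕ) (hd : 2 ≤ d) (hk : 2 ≤ k) (P : ℝ)
    (hPlow : 1 / (k : ℝ) ≤ P) (hPhigh : P ≤ 1 / ((k : ℝ) - 1))
    (lamk lam1 : ℝ)
    (hlamk : lamk = 1 / (k : ℝ) - Real.sqrt ((1 - 1 / (k : ℝ)) * (P - 1 / (k : ℝ))))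
    (hlam1 : lam1 = (1 - lamk) / ((k : ℝ) - 1))
    (p : Fin d → ℝ) (hp0 : ∀ i, 0 ≤ p i) (hpsum : ∑ i, p i = 1)
    (hpur : ∑ i, (p i) ^ 2 = P) :
    -(∑ i, p i * Real.log (p i)) ≥
      -((1 - lamk) * Real.log lam1 + lamk * Real.log lamk) :=
  entropy_lower_bound_at_fixed_purity_general d k hk P hPlow hPhigh lamk lam1 hlamk hlam1 p hp0
    hpsum hpur
end

section
/- Let k ≥ 2 be an integer and 1/k ≤ P ≤ 1/(k-1). Set λ_k = 1/k − √((1 − 1/k)(P − 1/k)) and λ₁ = (1 − λ_k)/(k − 1). Then the vector consisting of k − 1 entries equal to λ₁ and one entry equal to λ_k is a probability vector (all entries nonnegative, summing to 1), has purity (k−1)λ₁² + λ_k² = P, and has Shannon entropy exactly −[(1 − λ_k) ln λ₁ + λ_k ln λ_k]; hence the minimum of the Shannon entropy over probability vectors of fixed purity P equals L(P). -/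
/-!
A minimiser of the entropy among nonnegative vectors with `∑ p = 1` and `∑ p² = P` exists by
compactness, and deleting its zero entries leaves a positive minimiser. Three of its entries can be
moved along the circle on which their sum and their sum of squares stay constant. To first order
this forces the points `(pᵢ, log pᵢ)` of any three entries to be collinear, which strict concavity
of `log` forbids for three distinct values; to second order it forces the smallest value to occur
only once. So the minimiser is `(b, a, …, a)` with `b ≤ a`, and the two constraints determine its
length and give `b = λ_k`, `a = λ₁`.
-/

open Real Filter Topology Finset

theorem IsLocalMin.nonneg_of_hasDerivAt_deriv {f f' : ℝ → ℝ} {x₀ c : ℝ} (hmin : IsLocalMin f x₀)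
    (hf : ∀ᶠ x in 𝓝 x₀, HasDerivAt f (f' x) x) (hf' : HasDerivAt f' c x₀) : 0 ≤ c := by
  by_contra! hc
  have hderiv : deriv f =ᶠ[𝓝 x₀] f' := hf.mono fun x h => h.deriv
  have hd2 : deriv (deriv f) x₀ = c := hderiv.deriv_eq.trans hf'.deriv
  -- the second derivative test makes `x₀` a local maximum too, so `f` is locally constant
  have hmax : IsLocalMax f x₀ :=
    isLocalMax_of_deriv_deriv_neg (hd2 ▸ hc)
      (hderiv.eq_of_nhds.trans (hmin.hasDerivAt_eq_zero hf.self_of_nhds))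
      hf.self_of_nhds.continuousAt
  have hconst : f =ᶠ[𝓝 x₀] fun _ => f x₀ :=
    (hmin.and hmax).mono fun x h => le_antisymm h.2 h.1
  have : deriv (deriv f) x₀ = 0 := by
    rw [hconst.deriv.deriv_eq]
    simp
  linarith

def MinimizesEntropy {ι : Type*} [Fintype ι] (q : ι → ℝ) : Prop :=
  ∀ y : ι → ℝ, 0 ≤ y → ∑ i, y i = ∑ i, q i → ∑ i, y i ^ 2 = ∑ i, q i ^ 2 →
    ∑ i, negMulLog (q i) ≤ ∑ i, negMulLog (y i)

section Minimizers

variable {ι κ : Type*} [Fintype ι] [Fintype κ]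

theorem sum_comp_extend_add {f : κ → ι} (hf : Function.Injective f) (y : κ → ℝ) (q : ι → ℝ)
    (ψ : ℝ → ℝ) :
    ∑ i, ψ (Function.extend f y q i) + ∑ k, ψ (q (f k)) = ∑ i, ψ (q i) + ∑ k, ψ (y k) := by
  classical
  set s := (univ : Finset κ).map ⟨f, hf⟩
  have hsplit (h : ι → ℝ) : ∑ i, h i = ∑ k, h (f k) + ∑ i ∈ sᶜ, h i := by
    rw [← sum_add_sum_compl s, sum_map]
    rfl
  have hcompl : ∑ i ∈ sᶜ, ψ (Function.extend f y q i) = ∑ i ∈ sᶜ, ψ (q i) :=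
    sum_congr rfl fun i hi => by
      rw [Function.extend_apply']
      simpa [s] using hi
  rw [hsplit fun i => ψ (Function.extend f y q i), hsplit fun i => ψ (q i), hcompl]
  simp only [hf.extend_apply]
  ring

theorem MinimizesEntropy.comp_injective {q : ι → ℝ} (hq : MinimizesEntropy q) (hq0 : 0 ≤ q)
    {f : κ → ι} (hf : Function.Injective f) : MinimizesEntropy (q ∘ f) := by
  intro y hy hsum hsq
  have hid := sum_comp_extend_add hf y q fun x => x
  have hsq' := sum_comp_extend_add hf y q fun x => x ^ 2
  have hent := sum_comp_extend_add hf y q negMulLog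
  simp only [Function.comp_apply] at hsum hsq ⊢
  have hext : 0 ≤ Function.extend f y q := fun i => by
    by_cases h : ∃ k, f k = i
    · obtain ⟨k, rfl⟩ := h
      simpa [hf.extend_apply] using hy k
    · simpa [Function.extend_apply' _ _ _ h] using hq0 i
  have := hq _ hext (by linarith) (by linarith)
  linarith

theorem sum_subtype_ne_zero (q : ι → ℝ) {ψ : ℝ → ℝ} (hψ : ψ 0 = 0) :
    ∑ i : {i // q i ≠ 0}, ψ (q i) = ∑ i, ψ (q i) := by
  classical
  have hzero : ∑ i : {i // ¬q i ≠ 0}, ψ (q i) = 0 :=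
    sum_eq_zero fun i _ => by rw [not_not.mp i.2, hψ]
  rw [← Fintype.sum_subtype_add_sum_subtype (fun i => q i ≠ 0) fun i => ψ (q i), hzero, add_zero]

theorem exists_minimizesEntropy (p : ι → ℝ) (hp : 0 ≤ p) :
    ∃ q : ι → ℝ, 0 ≤ q ∧ ∑ i, q i = ∑ i, p i ∧ ∑ i, q i ^ 2 = ∑ i, p i ^ 2 ∧
      MinimizesEntropy q := by
  set K := Set.Ici (0 : ι → ℝ) ∩ {x | ∑ i, x i = ∑ i, p i} ∩ {x | ∑ i, x i ^ 2 = ∑ i, p i ^ 2}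
  have hclosed : IsClosed K :=
    (isClosed_Ici.inter (isClosed_eq (by fun_prop) continuous_const)).inter
      (isClosed_eq (by fun_prop) continuous_const)
  have hbdd : K ⊆ Set.Icc 0 fun _ => ∑ i, p i := fun x ⟨⟨hx0, hx1⟩, _⟩ =>
    ⟨hx0, fun i => hx1 ▸ single_le_sum (fun j _ => hx0 j) (mem_univ i)⟩
  obtain ⟨q, ⟨⟨hq0, hq1⟩, hq2⟩, hmin⟩ :=
    (isCompact_Icc.of_isClosed_subset hclosed hbdd).exists_isMinOn ⟨p, ⟨hp, rfl⟩, rfl⟩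
      (by fun_prop : Continuous fun x : ι → ℝ => ∑ i, negMulLog (x i)).continuousOn
  exact ⟨q, hq0, hq1, hq2, fun y hy h1 h2 => hmin ⟨⟨hy, h1.trans hq1⟩, h2.trans hq2⟩⟩

end Minimizers

section Arc

variable {ι : Type*} (m : ℝ) (e g : ι → ℝ)

noncomputable def arc (t : ℝ) (i : ι) : ℝ := m + e i * cos t + g i * sin t

variable {m e g}

theorem hasDerivAt_arc (t : ℝ) (i : ι) :
    HasDerivAt (fun t => arc m e g t i) (g i * cos t - e i * sin t) t := by
  have := (((hasDerivAt_cos t).const_mul (e i)).const_add m).add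
    ((hasDerivAt_sin t).const_mul (g i))
  exact this.congr_deriv (by ring)

theorem hasDerivAt_negMulLog_arc {t : ℝ} {i : ι} (h : arc m e g t i ≠ 0) :
    HasDerivAt (fun t => negMulLog (arc m e g t i))
      ((-log (arc m e g t i) - 1) * (g i * cos t - e i * sin t)) t := by
  have := (hasDerivAt_negMulLog h).comp t (hasDerivAt_arc t i)
  exact this

theorem hasDerivAt_deriv_negMulLog_arc_zero {i : ι} (h : 0 < m + e i) :
    HasDerivAt (fun t => (-log (arc m e g t i) - 1) * (g i * cos t - e i * sin t))
      (-g i ^ 2 / (m + e i) + (log (m + e i) + 1) * e i) 0 := by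
  have hγ := hasDerivAt_arc (m := m) (e := e) (g := g) 0 i
  have hγ' := ((hasDerivAt_cos 0).const_mul (g i)).fun_sub ((hasDerivAt_sin 0).const_mul (e i))
  have := (((hγ.log (by simpa [arc] using h.ne')).fun_neg).sub_const 1).fun_mul hγ'
  refine this.congr_deriv ?_
  simp only [arc, cos_zero, sin_zero, mul_zero, mul_one, add_zero, sub_zero, neg_zero]
  field_simp
  ring

theorem eventually_arc_pos [Finite ι] (h : ∀ i, 0 < m + e i) :
    ∀ᶠ t in 𝓝 0, ∀ i, 0 < arc m e g t i :=
  eventually_all.2 fun i =>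
    continuousAt_const.eventually_lt (hasDerivAt_arc 0 i).continuousAt (by simpa [arc] using h i)

theorem IsLocalMin.lagrange_conditions_arc [Fintype ι]
    (hmin : IsLocalMin (fun t => ∑ i, negMulLog (arc m e g t i)) 0) (h : ∀ i, 0 < m + e i) :
    ∑ i, (log (m + e i) + 1) * g i = 0 ∧
      ∑ i, g i ^ 2 / (m + e i) ≤ ∑ i, (log (m + e i) + 1) * e i := by
  have hderiv : ∀ᶠ t in 𝓝 0, HasDerivAt (fun t => ∑ i, negMulLog (arc m e g t i))
      (∑ i, (-log (arc m e g t i) - 1) * (g i * cos t - e i * sin t)) t := by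
    filter_upwards [eventually_arc_pos h] with t ht
    exact HasDerivAt.fun_sum fun i _ => hasDerivAt_negMulLog_arc (ht i).ne'
  have hfirst := hmin.hasDerivAt_eq_zero hderiv.self_of_nhds
  have hsecond := hmin.nonneg_of_hasDerivAt_deriv hderiv
    (HasDerivAt.fun_sum fun i _ => hasDerivAt_deriv_negMulLog_arc_zero (h i))
  simp only [arc, cos_zero, sin_zero, mul_zero, mul_one, add_zero, sub_zero, ← neg_add', neg_mul,
    sum_neg_distrib, neg_eq_zero] at hfirst
  simp only [sum_add_distrib, neg_div, sum_neg_distrib] at hsecond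
  exact ⟨hfirst, by linarith⟩

theorem MinimizesEntropy.isLocalMin_arc [Fintype ι] {q : ι → ℝ} (hq : MinimizesEntropy q)
    (hpos : ∀ i, 0 < q i) (h0 : ∀ i, m + e i = q i) (hsum : ∀ t, ∑ i, arc m e g t i = ∑ i, q i)
    (hsq : ∀ t, ∑ i, arc m e g t i ^ 2 = ∑ i, q i ^ 2) :
    IsLocalMin (fun t => ∑ i, negMulLog (arc m e g t i)) 0 := by
  filter_upwards [eventually_arc_pos fun i => (h0 i).symm ▸ hpos i] with t ht
  simpa [arc, h0] using hq _ (fun i => (ht i).le) (hsum t) (hsq t)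

end Arc

theorem MinimizesEntropy.lagrange_conditions_fin_three {x : Fin 3 → ℝ}
    (hx : MinimizesEntropy x) (hpos : ∀ i, 0 < x i) :
    (x 2 - x 1) * log (x 0) + (x 0 - x 2) * log (x 1) + (x 1 - x 0) * log (x 2) = 0 ∧
      (x 2 - x 1) ^ 2 / x 0 + (x 0 - x 2) ^ 2 / x 1 + (x 1 - x 0) ^ 2 / x 2 ≤
        (2 * x 0 - x 1 - x 2) * log (x 0) + (2 * x 1 - x 0 - x 2) * log (x 1) +
          (2 * x 2 - x 0 - x 1) * log (x 2) := by
  set m := (∑ i, x i) / 3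
  -- `g` is orthogonal to `(1, 1, 1)` and to `x - m`, and has the same length as `x - m`
  set g : Fin 3 → ℝ := fun i => ![x 2 - x 1, x 0 - x 2, x 1 - x 0] i / √3
  have h0 (i : Fin 3) : m + (x i - m) = x i := add_sub_cancel m (x i)
  have hsum (t : ℝ) : ∑ i, arc m (fun i => x i - m) g t i = ∑ i, x i := by
    simp only [arc, g, m, Fin.sum_univ_three, Matrix.cons_val]
    ring
  have hsq (t : ℝ) : ∑ i, arc m (fun i => x i - m) g t i ^ 2 = ∑ i, x i ^ 2 := by
    have hr : (√3)⁻¹ ^ 2 = 1 / 3 := by rw [inv_pow, sq_sqrt (by norm_num)]; norm_num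
    simp only [arc, g, m, Fin.sum_univ_three, div_eq_mul_inv _ √3, Matrix.cons_val]
    linear_combination (2 / 3 * (x 0 ^ 2 + x 1 ^ 2 + x 2 ^ 2 - x 0 * x 1 - x 1 * x 2 - x 0 * x 2)) *
      (sin_sq_add_cos_sq t + 3 * sin t ^ 2 * hr)
  obtain ⟨hfirst, hsecond⟩ :=
    (hx.isLocalMin_arc hpos h0 hsum hsq).lagrange_conditions_arc fun i => (h0 i).symm ▸ hpos i
  simp only [g, m, Fin.sum_univ_three, add_sub_cancel, Matrix.cons_val] at hfirst hsecond
  field_simp at hfirst hsecond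
  rw [sq_sqrt (by norm_num)] at hsecond
  exact ⟨by linear_combination hfirst, by linarith⟩

theorem injective_vec_three {κ : Type*} {i j l : κ} (hij : i ≠ j) (hil : i ≠ l) (hjl : j ≠ l) :
    Function.Injective ![i, j, l] := by
  intro a b h
  fin_cases a <;> fin_cases b <;> simp_all [eq_comm]

section PositiveMinimizers

variable {κ : Type*} [Fintype κ] {q : κ → ℝ}

theorem MinimizesEntropy.eq_or_eq_of_le_of_le (hq : MinimizesEntropy q) (hpos : ∀ i, 0 < q i)
    {i j l : κ} (hlj : q l ≤ q j) (hji : q j ≤ q i) : q j = q l ∨ q j = q i := by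
  by_contra! hne
  have hlj' := lt_of_le_of_ne hlj hne.1.symm
  have hji' := lt_of_le_of_ne hji hne.2
  have hinj := injective_vec_three (ne_of_apply_ne q hji'.ne')
    (ne_of_apply_ne q (hlj'.trans hji').ne') (ne_of_apply_ne q hlj'.ne')
  have hx := ((hq.comp_injective (fun i => (hpos i).le) hinj).lagrange_conditions_fin_three
    fun _ => hpos _).1
  have hconv := strictConcaveOn_log_Ioi.neg.secant_strict_mono_aux1 (hpos l) (hpos i) hlj' hji'
  simp only [Function.comp_apply, Matrix.cons_val, Pi.neg_apply] at hx hconv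
  linarith

theorem MinimizesEntropy.eq_of_eq_of_lt (hq : MinimizesEntropy q) (hpos : ∀ i, 0 < q i)
    {i j l : κ} (hij : q i = q j) (hil : q i < q l) : i = j := by
  by_contra hne
  have hinj := injective_vec_three hne (ne_of_apply_ne q hil.ne) (ne_of_apply_ne q (hij ▸ hil).ne)
  have hx := ((hq.comp_injective (fun i => (hpos i).le) hinj).lagrange_conditions_fin_three
    fun _ => hpos _).2
  simp only [Function.comp_apply, Matrix.cons_val, ← hij, sub_self, ne_eq, OfNat.ofNat_ne_zero,
    not_false_eq_true, zero_pow, zero_div, add_zero] at hx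
  set b := q i
  set a := q l
  have hb : 0 < b := hpos i
  have hlog : log a - log b < (a - b) / b := by
    rw [← log_div (hpos l).ne' hb.ne', sub_div, div_self hb.ne']
    exact log_lt_sub_one_of_pos (div_pos (hpos l) hb)
      (by rw [ne_eq, div_eq_one_iff_eq hb.ne']; exact hil.ne')
  have := mul_lt_mul_of_pos_left hlog (sub_pos.2 hil)
  have e1 : (a - b) * ((a - b) / b) = (a - b) ^ 2 / b := by ring
  have e2 : (b - a) ^ 2 / b = (a - b) ^ 2 / b := by ring
  linarith

theorem MinimizesEntropy.exists_forall_ne_eq [Nonempty κ] (hq : MinimizesEntropy q)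
    (hpos : ∀ i, 0 < q i) : ∃ i₀ a, q i₀ ≤ a ∧ ∀ i, i ≠ i₀ → q i = a := by
  obtain ⟨ib, hib⟩ := Finite.exists_min q
  obtain ⟨ia, hia⟩ := Finite.exists_max q
  refine ⟨ib, q ia, hia ib, fun i hi => ?_⟩
  rcases hq.eq_or_eq_of_le_of_le hpos (hib i) (hia i) with h | h
  · rcases (hib ia).lt_or_eq with hlt | heq
    · exact absurd (hq.eq_of_eq_of_lt hpos h (h ▸ hlt)) hi
    · exact h.trans heq
  · exact h

end PositiveMinimizers

-- `smallWeight k P` and `largeWeight k P` are the `λ_k` and `λ₁` of the statement.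
noncomputable def smallWeight (k : ℕ) (P : ℝ) : ℝ :=
  1 / (k : ℝ) - √((1 - 1 / (k : ℝ)) * (P - 1 / (k : ℝ)))

noncomputable def largeWeight (k : ℕ) (P : ℝ) : ℝ := (1 - smallWeight k P) / ((k : ℝ) - 1)

noncomputable def minEntropy (k : ℕ) (P : ℝ) : ℝ :=
  -((1 - smallWeight k P) * log (largeWeight k P) + smallWeight k P * log (smallWeight k P))

section Weights

variable {k : ℕ} {P : ℝ}

theorem sub_one_mul_largeWeight (hk : 2 ≤ k) :
    ((k : ℝ) - 1) * largeWeight k P = 1 - smallWeight k P := by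
  have : (2 : ℝ) ≤ k := by exact_mod_cast hk
  rw [largeWeight, mul_div_cancel₀ _ (by linarith)]

theorem smallWeight_le_largeWeight (hk : 2 ≤ k) : smallWeight k P ≤ largeWeight k P := by
  have : (2 : ℝ) ≤ k := by exact_mod_cast hk
  have hs : 0 ≤ √((1 - 1 / (k : ℝ)) * (P - 1 / (k : ℝ))) := sqrt_nonneg _
  rw [largeWeight, le_div_iff₀ (by linarith), smallWeight]
  have : (k : ℝ) * (1 / k) = 1 := by field_simp
  nlinarith

theorem smallWeight_nonneg (hk : 2 ≤ k) (hP : P ≤ 1 / ((k : ℝ) - 1)) : 0 ≤ smallWeight k P := by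
  have hk' : (2 : ℝ) ≤ k := by exact_mod_cast hk
  have hk1 : (k : ℝ) - 1 ≠ 0 := by linarith
  have hbound : (1 - 1 / (k : ℝ)) * (P - 1 / k) ≤ (1 / k) ^ 2 :=
    calc (1 - 1 / (k : ℝ)) * (P - 1 / k) ≤ (1 - 1 / (k : ℝ)) * (1 / ((k : ℝ) - 1) - 1 / k) :=
          mul_le_mul_of_nonneg_left (by linarith) (by rw [sub_nonneg, div_le_one] <;> linarith)
      _ = (1 / k) ^ 2 := by field_simp; ring
  rw [smallWeight, sub_nonneg]
  exact (sqrt_le_left (by positivity)).2 hbound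

theorem sub_one_mul_largeWeight_sq_add_smallWeight_sq (hk : 2 ≤ k) (hP : 1 / (k : ℝ) ≤ P) :
    ((k : ℝ) - 1) * largeWeight k P ^ 2 + smallWeight k P ^ 2 = P := by
  have hk' : (2 : ℝ) ≤ k := by exact_mod_cast hk
  have hk1 : (k : ℝ) - 1 ≠ 0 := by linarith
  have hs := sq_sqrt (mul_nonneg (by rw [sub_nonneg, div_le_one] <;> linarith : (0 : ℝ) ≤ 1 - 1 / k)
    (sub_nonneg.2 hP))
  rw [largeWeight, smallWeight]
  set s := √((1 - 1 / (k : ℝ)) * (P - 1 / k))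
  field_simp
  field_simp at hs
  linear_combination (k : ℝ) * hs

theorem eq_smallWeight_of {a b : ℝ} (hk : 2 ≤ k) (hba : b ≤ a) (h1 : ((k : ℝ) - 1) * a + b = 1)
    (h2 : ((k : ℝ) - 1) * a ^ 2 + b ^ 2 = P) : b = smallWeight k P ∧ a = largeWeight k P := by
  have hk' : (2 : ℝ) ≤ k := by exact_mod_cast hk
  have hk1 : (k : ℝ) - 1 ≠ 0 := by linarith
  have hbk : b ≤ 1 / k := by
    rw [le_div_iff₀ (by linarith)]
    nlinarith
  have ha : a = (1 - b) / ((k : ℝ) - 1) := by rw [eq_div_iff hk1]; linarith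
  have hsq : (1 - 1 / (k : ℝ)) * (P - 1 / k) = (1 / k - b) ^ 2 := by
    rw [← h2, ha]
    field_simp
    ring
  have hb : b = smallWeight k P := by rw [smallWeight, hsq, sqrt_sq (by linarith)]; ring
  exact ⟨hb, by rw [largeWeight, ← hb, ha]⟩

theorem minEntropy_eq (hk : 2 ≤ k) :
    minEntropy k P = negMulLog (smallWeight k P) + ((k : ℝ) - 1) * negMulLog (largeWeight k P) := by
  rw [minEntropy, negMulLog, negMulLog, ← sub_one_mul_largeWeight hk]
  ring

end Weights

theorem eq_or_add_one_eq_of_sum_sq {n k : ℕ} {a b P : ℝ} (hk : 2 ≤ k) (hb : 0 < b) (hba : b ≤ a)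
    (h1 : ((n : ℝ) - 1) * a + b = 1) (h2 : ((n : ℝ) - 1) * a ^ 2 + b ^ 2 = P)
    (hPlow : 1 / (k : ℝ) ≤ P) (hPhigh : P ≤ 1 / ((k : ℝ) - 1)) : n = k ∨ n + 1 = k := by
  have hk' : (2 : ℝ) ≤ k := by exact_mod_cast hk
  rcases Nat.eq_zero_or_pos n with rfl | hn
  · norm_num at h1
    linarith
  have hn' : (1 : ℝ) ≤ n := by exact_mod_cast hn
  have hkP : 1 ≤ (k : ℝ) * P := by rwa [div_le_iff₀ (by linarith), mul_comm] at hPlow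
  have hk1P : ((k : ℝ) - 1) * P ≤ 1 := by rwa [le_div_iff₀ (by linarith), mul_comm] at hPhigh
  have hnP : (n : ℝ) * P - 1 = ((n : ℝ) - 1) * (a - b) ^ 2 := by
    rw [← h2]
    linear_combination (((n : ℝ) - 1) * a + b + 1) * h1
  have hn1P : ((n : ℝ) - 1) * P - 1 = b * (n * b - 2) := by
    rw [← h2]
    linear_combination (((n : ℝ) - 1) * a + 1 - b) * h1
  have hnP1 : 1 ≤ (n : ℝ) * P := by nlinarith [mul_nonneg (sub_nonneg.2 hn') (sq_nonneg (a - b))]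
  have hnb : (n : ℝ) * b ≤ 1 := by nlinarith [mul_le_mul_of_nonneg_left hba (sub_nonneg.2 hn')]
  have hn1P1 : ((n : ℝ) - 1) * P < 1 := by nlinarith [mul_pos hb (by linarith : 0 < 2 - n * b)]
  have hnk : (n : ℝ) < k + 1 := by
    nlinarith [mul_le_mul_of_nonneg_left hkP (sub_nonneg.2 hn'),
      mul_lt_mul_of_pos_left hn1P1 (by linarith : (0 : ℝ) < k)]
  have hkn : (k : ℝ) ≤ n + 1 := by
    nlinarith [mul_le_mul_of_nonneg_left hnP1 (by linarith : (0 : ℝ) ≤ k - 1),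
      mul_le_mul_of_nonneg_left hk1P (by linarith : (0 : ℝ) ≤ n)]
  have : n < k + 1 := by exact_mod_cast hnk
  have : k ≤ n + 1 := by exact_mod_cast hkn
  omega

theorem negMulLog_add_mul_negMulLog_eq_minEntropy {n k : ℕ} {a b P : ℝ} (hk : 2 ≤ k)
    (hb : 0 < b) (hba : b ≤ a) (h1 : ((n : ℝ) - 1) * a + b = 1)
    (h2 : ((n : ℝ) - 1) * a ^ 2 + b ^ 2 = P)
    (hPlow : 1 / (k : ℝ) ≤ P) (hPhigh : P ≤ 1 / ((k : ℝ) - 1)) :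
    negMulLog b + ((n : ℝ) - 1) * negMulLog a = minEntropy k P := by
  rcases eq_or_add_one_eq_of_sum_sq hk hb hba h1 h2 hPlow hPhigh with rfl | rfl
  · obtain ⟨rfl, rfl⟩ := eq_smallWeight_of hk hba h1 h2
    rw [minEntropy_eq hk]
  · -- `P = 1 / n`: the vector is uniform on `n` points, i.e. it is the `k`-point `(0, b, …, b)`
    have hn' : (1 : ℝ) ≤ n := by exact_mod_cast (by omega : 1 ≤ n)
    have hkn : ((n + 1 : ℕ) : ℝ) - 1 = n := by push_cast; ring
    have hab : (n : ℝ) - 1 = 0 ∨ a = b := by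
      have hnP : (n : ℝ) * P ≤ 1 := by rwa [hkn, le_div_iff₀ (by linarith), mul_comm] at hPhigh
      have : ((n : ℝ) - 1) * (a - b) ^ 2 = 0 := by
        nlinarith [mul_nonneg (sub_nonneg.2 hn') (sq_nonneg (a - b))]
      simpa [sub_eq_zero] using this
    have hcollapse : ((n : ℝ) - 1) * a = ((n : ℝ) - 1) * b ∧
        ((n : ℝ) - 1) * a ^ 2 = ((n : ℝ) - 1) * b ^ 2 ∧
        ((n : ℝ) - 1) * negMulLog a = ((n : ℝ) - 1) * negMulLog b := by
      rcases hab with h | rfl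
      · simp [h]
      · simp
    obtain ⟨hb', ha'⟩ := eq_smallWeight_of (P := P) (a := b) (b := 0) hk hb.le
      (by rw [hkn]; linear_combination h1 - hcollapse.1)
      (by rw [hkn]; linear_combination h2 - hcollapse.2.1)
    rw [minEntropy_eq hk, ← hb', ← ha', negMulLog_zero, hkn]
    linear_combination hcollapse.2.2

theorem sum_eq_add_card_sub_one_mul {κ : Type*} [Fintype κ] {f : κ → ℝ} (i₀ : κ) {c : ℝ}
    (h : ∀ i, i ≠ i₀ → f i = c) : ∑ i, f i = f i₀ + ((Fintype.card κ : ℝ) - 1) * c := by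
  classical
  have : Nonempty κ := ⟨i₀⟩
  rw [← add_sum_erase _ _ (mem_univ i₀), sum_congr rfl fun i hi => h i (ne_of_mem_erase hi),
    sum_const, card_erase_of_mem (mem_univ _), card_univ, nsmul_eq_mul,
    Nat.cast_sub Fintype.card_pos, Nat.cast_one]

theorem MinimizesEntropy.sum_negMulLog_eq_minEntropy {κ : Type*} [Fintype κ] {q : κ → ℝ} {k : ℕ}
    {P : ℝ} (hq : MinimizesEntropy q) (hpos : ∀ i, 0 < q i) (h1 : ∑ i, q i = 1)
    (h2 : ∑ i, q i ^ 2 = P) (hk : 2 ≤ k) (hPlow : 1 / (k : ℝ) ≤ P)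
    (hPhigh : P ≤ 1 / ((k : ℝ) - 1)) : ∑ i, negMulLog (q i) = minEntropy k P := by
  have : Nonempty κ := by
    by_contra h
    rw [not_nonempty_iff] at h
    simp at h1
  obtain ⟨i₀, a, ha, hrest⟩ := hq.exists_forall_ne_eq hpos
  have hsplit (ψ : ℝ → ℝ) : ∑ i, ψ (q i) = ψ (q i₀) + ((Fintype.card κ : ℝ) - 1) * ψ a :=
    sum_eq_add_card_sub_one_mul i₀ fun i hi => by rw [hrest i hi]
  rw [hsplit negMulLog]
  exact negMulLog_add_mul_negMulLog_eq_minEntropy hk (hpos i₀) ha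
    (by linarith [hsplit fun x => x]) (by linarith [hsplit fun x => x ^ 2]) hPlow hPhigh

theorem minEntropy_le_sum_negMulLog {ι : Type*} [Fintype ι] {k : ℕ} {P : ℝ} (hk : 2 ≤ k)
    (hPlow : 1 / (k : ℝ) ≤ P) (hPhigh : P ≤ 1 / ((k : ℝ) - 1)) {p : ι → ℝ} (hp : 0 ≤ p)
    (h1 : ∑ i, p i = 1) (h2 : ∑ i, p i ^ 2 = P) : minEntropy k P ≤ ∑ i, negMulLog (p i) := by
  obtain ⟨q, hq0, hq1, hq2, hq⟩ := exists_minimizesEntropy p hp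
  have hsupp := hq.comp_injective hq0 (Subtype.val_injective (p := fun i => q i ≠ 0))
  have hpos (i : {i // q i ≠ 0}) : 0 < q i := (hq0 i).lt_of_ne' i.2
  calc minEntropy k P = ∑ i : {i // q i ≠ 0}, negMulLog (q i) :=
        (hsupp.sum_negMulLog_eq_minEntropy hpos
          (by rw [← h1, ← hq1]; exact sum_subtype_ne_zero q (ψ := fun x => x) rfl)
          (by rw [← h2, ← hq2]; exact sum_subtype_ne_zero q (ψ := (· ^ 2)) (zero_pow two_ne_zero))
          hk hPlow hPhigh).symm
    _ = ∑ i, negMulLog (q i) := sum_subtype_ne_zero q negMulLog_zero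
    _ ≤ ∑ i, negMulLog (p i) := hq p hp hq1.symm hq2.symm

/-- For `k ≥ 2` and `1/k ≤ P ≤ 1/(k−1)`, the vector with `k − 1`
entries equal to `λ₁ = (1 − λ_k)/(k − 1)` and one entry equal to
`λ_k = 1/k − √((1 − 1/k)(P − 1/k))` is a probability vector, has purity
`(k−1)λ₁² + λ_k² = P`, and has Shannon entropy exactly
`−[(1 − λ_k) ln λ₁ + λ_k ln λ_k]`; hence the minimum of the Shannon entropy over
probability vectors of fixed purity `P` equals `L(P)`. -/
theorem entropy_minimizer_at_fixed_purity
    (k : ℕ) (hk : 2 ≤ k) (P : ℝ)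
    (hPlow : 1 / (k : ℝ) ≤ P) (hPhigh : P ≤ 1 / ((k : ℝ) - 1))
    (lamk lam1 : ℝ)
    (hlamk : lamk = 1 / (k : ℝ) - Real.sqrt ((1 - 1 / (k : ℝ)) * (P - 1 / (k : ℝ))))
    (hlam1 : lam1 = (1 - lamk) / ((k : ℝ) - 1))
    (v : Fin k → ℝ) (hv : v = fun i : Fin k => if (i : ℕ) = 0 then lamk else lam1) :
    (∀ i, 0 ≤ v i) ∧ (∑ i, v i = 1) ∧
    (((k : ℝ) - 1) * lam1 ^ 2 + lamk ^ 2 = P) ∧ (∑ i, (v i) ^ 2 = P) ∧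
    (-(∑ i, v i * Real.log (v i)) =
      -((1 - lamk) * Real.log lam1 + lamk * Real.log lamk)) ∧
    IsLeast { H : ℝ | ∃ (d : ℕ) (p : Fin d → ℝ),
        (∀ i, 0 ≤ p i) ∧ (∑ i, p i = 1) ∧ (∑ i, (p i) ^ 2 = P) ∧
        H = -(∑ i, p i * Real.log (p i)) }
      (-((1 - lamk) * Real.log lam1 + lamk * Real.log lamk)) := by
  obtain rfl : lamk = smallWeight k P := hlamk
  obtain rfl : lam1 = largeWeight k P := hlam1
  have hentropy {d : ℕ} (p : Fin d → ℝ) : -(∑ i, p i * log (p i)) = ∑ i, negMulLog (p i) := by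
    simp [negMulLog, ← sum_neg_distrib]
  have hsplit (ψ : ℝ → ℝ) :
      ∑ i, ψ (v i) = ψ (smallWeight k P) + ((k : ℝ) - 1) * ψ (largeWeight k P) := by
    have := sum_eq_add_card_sub_one_mul (f := fun i => ψ (v i)) (⟨0, by omega⟩ : Fin k)
      (c := ψ (largeWeight k P)) fun i hi => by simp [hv, Fin.ext_iff.not.mp hi]
    simpa [hv] using this
  have hv0 (i : Fin k) : 0 ≤ v i := by
    simp only [hv]
    split_ifs
    · exact smallWeight_nonneg hk hPhigh
    · exact (smallWeight_nonneg hk hPhigh).trans (smallWeight_le_largeWeight hk)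
  have hv1 : ∑ i, v i = 1 := by rw [hsplit fun x => x, sub_one_mul_largeWeight hk]; ring
  have hpurity := sub_one_mul_largeWeight_sq_add_smallWeight_sq hk hPlow
  have hv2 : ∑ i, v i ^ 2 = P := by rw [hsplit fun x => x ^ 2]; linear_combination hpurity
  have hv3 : -(∑ i, v i * log (v i)) = minEntropy k P := by
    rw [hentropy, hsplit, minEntropy_eq hk]
  refine ⟨hv0, hv1, hpurity, hv2, hv3, ⟨k, v, hv0, hv1, hv2, hv3.symm⟩, ?_⟩
  rintro H ⟨d, p, hp, hp1, hp2, rfl⟩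
  rw [hentropy]
  exact minEntropy_le_sum_negMulLog hk hPlow hPhigh hp hp1 hp2
end

section
/- Let d ≥ 2 and 1/d ≤ P ≤ 1. Set λ = 1/d + √((1 − 1/d)(P − 1/d)). Then for every probability vector (p₁,…,p_d) with Σ p_i² = P, the Shannon entropy satisfies −Σ_i p_i ln p_i ≤ −[(1 − λ) ln((1 − λ)/(d − 1)) + λ ln λ]. -/
/-! Let `μ = (1 - λ) / (d - 1)`. The vector `(λ, μ, …, μ)` has the same mass and purity as `p`,
and by Cauchy–Schwarz on the remaining entries no `pᵢ` exceeds `λ`. Let `q` be the quadratic that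
touches `η(x) = -x log x` at `μ` and meets it again at `λ`. Since `q' - η'` is `log` plus an affine
function, hence concave, `q - η` has no sign changes besides its double zero at `μ` and its zero
at `λ`, so `η ≤ q` on `[0, λ]`. Hence `∑ η(pᵢ) ≤ ∑ q(pᵢ)`, and the right side depends only on the
first two moments of `p`, so it equals `∑ q = ∑ η` evaluated at `(λ, μ, …, μ)`. -/

open Real Set Finset

theorem nonneg_on_Icc_of_concaveOn_deriv {g k : ℝ → ℝ} {a μ b : ℝ} (hμ : μ ∈ Ioo a b)
    (hg : ContinuousOn g (Icc a b)) (hgk : ∀ x ∈ Ioo a b, HasDerivAt g (k x) x)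
    (hk : ConcaveOn ℝ (Ioo a b) k) (hgμ : g μ = 0) (hkμ : k μ = 0) (hgb : g b = 0) :
    ∀ x ∈ Icc a b, 0 ≤ g x := by
  -- `k` also vanishes at a Rolle point `ζ ∈ (μ, b)`; by concavity `k ≤ 0` on `(a, μ)`, `k ≥ 0` on
  -- `(μ, ζ)` and `k ≤ 0` on `(ζ, b)`, so `g` falls to `g μ = 0`, rises, then falls to `g b = 0`.
  obtain ⟨ζ, hζ, hkζ⟩ : ∃ ζ ∈ Ioo μ b, k ζ = 0 :=
    exists_hasDerivAt_eq_zero hμ.2 (hg.mono (Icc_subset_Icc_left hμ.1.le)) (hgμ.trans hgb.symm)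
      fun x hx => hgk x ⟨hμ.1.trans hx.1, hx.2⟩
  have hζab : ζ ∈ Ioo a b := ⟨hμ.1.trans hζ.1, hζ.2⟩
  have hderiv : ∀ {l r}, a ≤ l → r ≤ b → ∀ x ∈ interior (Icc l r),
      HasDerivWithinAt g (k x) (interior (Icc l r)) x := fun hl hr x hx => by
    rw [interior_Icc] at hx
    exact (hgk x ⟨hl.trans_lt hx.1, hx.2.trans_le hr⟩).hasDerivWithinAt
  intro x hx
  rcases le_total x μ with hxμ | hμx
  · have hanti : AntitoneOn g (Icc a μ) :=
      antitoneOn_of_hasDerivWithinAt_nonpos (convex_Icc a μ)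
        (hg.mono (Icc_subset_Icc_right hμ.2.le)) (hderiv le_rfl hμ.2.le) fun y hy => by
          rw [interior_Icc] at hy
          exact hkμ ▸ hk.left_le_of_le_right'' ⟨hy.1, hy.2.trans hμ.2⟩ hζab hy.2.le hζ.1
            (hkμ.trans hkζ.symm).le
    exact hgμ ▸ hanti ⟨hx.1, hxμ⟩ ⟨hμ.1.le, le_rfl⟩ hxμ
  rcases le_total x ζ with hxζ | hζx
  · have hmono : MonotoneOn g (Icc μ ζ) :=
      monotoneOn_of_hasDerivWithinAt_nonneg (convex_Icc μ ζ)
        (hg.mono (Icc_subset_Icc hμ.1.le hζ.2.le)) (hderiv hμ.1.le hζ.2.le) fun y hy => by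
          rw [interior_Icc] at hy
          have := hk.ge_on_segment hμ hζab (segment_eq_Icc hζ.1.le ▸ Ioo_subset_Icc_self hy)
          rwa [hkμ, hkζ, min_self] at this
    exact hgμ ▸ hmono ⟨le_rfl, hζ.1.le⟩ ⟨hμx, hxζ⟩ hμx
  · have hanti : AntitoneOn g (Icc ζ b) :=
      antitoneOn_of_hasDerivWithinAt_nonpos (convex_Icc ζ b)
        (hg.mono (Icc_subset_Icc_left hζab.1.le)) (hderiv hζab.1.le le_rfl) fun y hy => by
          rw [interior_Icc] at hy
          exact hkζ ▸ hk.right_le_of_le_left'' hμ ⟨hζab.1.trans hy.1, hy.2⟩ hζ.1 hy.1.le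
            (hkζ.trans hkμ.symm).le
    exact hgb ▸ hanti ⟨hζx, hx.2⟩ ⟨hζ.2.le, le_rfl⟩ hx.2

namespace Real

theorem negMulLog_le_tangent {μ x : ℝ} (hμ : 0 < μ) (hx : 0 ≤ x) :
    negMulLog x ≤ negMulLog μ + (-log μ - 1) * (x - μ) := by
  rcases hx.eq_or_lt with rfl | hx
  · simp only [negMulLog]; nlinarith
  · have := log_le_sub_one_of_pos (div_pos hμ hx)
    rw [log_div hμ.ne' hx.ne', le_sub_iff_add_le, div_eq_mul_inv] at this
    simp only [negMulLog]
    nlinarith [mul_inv_cancel₀ hx.ne']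

theorem negMulLog_le_tangent_add_sq {μ lam c : ℝ} (hμ : 0 < μ) (hμlam : μ < lam)
    (hc : negMulLog lam = negMulLog μ + (-log μ - 1) * (lam - μ) + c * (lam - μ) ^ 2) :
    ∀ x ∈ Icc 0 lam, negMulLog x ≤ negMulLog μ + (-log μ - 1) * (x - μ) + c * (x - μ) ^ 2 := by
  set g : ℝ → ℝ := fun x => negMulLog μ + (-log μ - 1) * (x - μ) + c * (x - μ) ^ 2 - negMulLog x
  have hgk : ∀ x ∈ Ioo 0 lam, HasDerivAt g (log x - log μ + 2 * c * (x - μ)) x := fun x hx => by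
    have hq : HasDerivAt (fun y => negMulLog μ + (-log μ - 1) * (y - μ) + c * (y - μ) ^ 2)
        (-log μ - 1 + 2 * c * (x - μ)) x :=
      ((((hasDerivAt_id x).sub_const μ).const_mul (-log μ - 1)).const_add (negMulLog μ)).add
        ((((hasDerivAt_id x).sub_const μ).pow 2).const_mul c) |>.congr_deriv (by simp; ring)
    exact (hq.sub (hasDerivAt_negMulLog hx.1.ne')).congr_deriv (by ring)
  have hk : ConcaveOn ℝ (Ioo 0 lam) fun x => log x - log μ + 2 * c * (x - μ) :=
    (((strictConcaveOn_log_Ioi.concaveOn.subset Ioo_subset_Ioi_self (convex_Ioo 0 lam)).add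
      (((2 * c) • LinearMap.id (R := ℝ) (M := ℝ)).concaveOn (convex_Ioo 0 lam))).add_const
      (-log μ - 2 * c * μ)).congr fun x _ => by simp; ring
  intro x hx
  have := nonneg_on_Icc_of_concaveOn_deriv ⟨hμ, hμlam⟩ (by fun_prop) hgk hk (by simp [g])
    (by simp) (by simp [g, hc]) x hx
  simp only [g] at this
  linarith

theorem exists_quadratic_majorant_negMulLog {μ lam : ℝ} (hμ : 0 < μ) (hμlam : μ ≤ lam) :
    ∃ a b c : ℝ, (∀ x ∈ Icc 0 lam, negMulLog x ≤ a + b * x + c * x ^ 2) ∧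
      negMulLog μ = a + b * μ + c * μ ^ 2 ∧ negMulLog lam = a + b * lam + c * lam ^ 2 := by
  rcases hμlam.eq_or_lt with rfl | hμlam
  · refine ⟨negMulLog μ - (-log μ - 1) * μ, -log μ - 1, 0, fun x hx => ?_, by ring, by ring⟩
    linarith [negMulLog_le_tangent hμ hx.1]
  · set c := (negMulLog lam - negMulLog μ - (-log μ - 1) * (lam - μ)) / (lam - μ) ^ 2
    have hc : negMulLog lam = negMulLog μ + (-log μ - 1) * (lam - μ) + c * (lam - μ) ^ 2 := by
      have : (lam - μ) ^ 2 ≠ 0 := by positivity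
      simp only [c]; field_simp; ring
    refine ⟨negMulLog μ - (-log μ - 1) * μ + c * μ ^ 2, -log μ - 1 - 2 * c * μ, c,
      fun x hx => ?_, by ring, by rw [hc]; ring⟩
    linarith [negMulLog_le_tangent_add_sq hμ hμlam hc x hx]

end Real

section Purity

variable {ι : Type*} [Fintype ι] {p : ι → ℝ}

theorem sq_sub_inv_card_le_of_sum_eq_one (hsum : ∑ i, p i = 1) (i : ι) :
    (p i - 1 / Fintype.card ι) ^ 2 ≤
      (1 - 1 / Fintype.card ι) * (∑ j, p j ^ 2 - 1 / Fintype.card ι) := by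
  classical
  have hn : (0 : ℝ) < Fintype.card ι := by exact_mod_cast Fintype.card_pos_iff.2 ⟨i⟩
  -- Cauchy–Schwarz on the other entries: `(1 - p i) ^ 2 ≤ (n - 1) * (∑ p ^ 2 - p i ^ 2)`.
  have hcs := sq_sum_le_card_mul_sum_sq (s := Finset.univ.erase i) (f := p)
  rw [card_erase_of_mem (mem_univ i), card_univ, Nat.cast_sub (Fintype.card_pos_iff.2 ⟨i⟩),
    sum_erase_eq_sub (mem_univ i), sum_erase_eq_sub (mem_univ i), hsum] at hcs
  field_simp
  push_cast at hcs
  nlinarith [hcs]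

theorem le_inv_card_add_sqrt_of_sum_eq_one (hsum : ∑ i, p i = 1) (i : ι) :
    p i ≤ 1 / Fintype.card ι +
      √((1 - 1 / Fintype.card ι) * (∑ j, p j ^ 2 - 1 / Fintype.card ι)) := by
  linarith [le_abs_self (p i - 1 / Fintype.card ι),
    abs_le_sqrt (sq_sub_inv_card_le_of_sum_eq_one hsum i)]

theorem sum_negMulLog_eq_zero_of_sum_sq_eq_one (hp0 : ∀ i, 0 ≤ p i) (hsum : ∑ i, p i = 1)
    (hsq : ∑ i, p i ^ 2 = 1) : ∑ i, negMulLog (p i) = 0 := by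
  have hterm : ∀ i ∈ Finset.univ, p i * (1 - p i) = 0 := by
    refine (sum_eq_zero_iff_of_nonneg fun i _ => mul_nonneg (hp0 i) (sub_nonneg.2 ?_)).1 ?_
    · exact hsum ▸ single_le_sum (fun j _ => hp0 j) (mem_univ i)
    · simp only [mul_sub, mul_one, ← sq, sum_sub_distrib, hsum, hsq, sub_self]
  refine sum_eq_zero fun i hi => ?_
  rcases mul_eq_zero.1 (hterm i hi) with h | h
  · simp [h]
  · simp [show p i = 1 by linarith]

theorem sum_negMulLog_le_of_sum_eq_of_sum_sq_eq {μ lam : ℝ} (hμ : 0 < μ) (hμlam : μ ≤ lam)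
    (hp0 : ∀ i, 0 ≤ p i) (hp_le : ∀ i, p i ≤ lam)
    (hsum : ∑ i, p i = (Fintype.card ι - 1) * μ + lam)
    (hsq : ∑ i, p i ^ 2 = (Fintype.card ι - 1) * μ ^ 2 + lam ^ 2) :
    ∑ i, negMulLog (p i) ≤ (Fintype.card ι - 1) * negMulLog μ + negMulLog lam := by
  obtain ⟨a, b, c, hle, hqμ, hqlam⟩ := exists_quadratic_majorant_negMulLog hμ hμlam
  calc ∑ i, negMulLog (p i) ≤ ∑ i, (a + b * p i + c * p i ^ 2) :=
        sum_le_sum fun i _ => hle _ ⟨hp0 i, hp_le i⟩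
    _ = (Fintype.card ι - 1) * (a + b * μ + c * μ ^ 2) + (a + b * lam + c * lam ^ 2) := by
        simp only [sum_add_distrib, ← mul_sum, sum_const, card_univ, nsmul_eq_mul, hsum, hsq]
        ring
    _ = (Fintype.card ι - 1) * negMulLog μ + negMulLog lam := by rw [hqμ, hqlam]

end Purity

theorem sub_one_mul_div_sq_add_sq_eq {n lam P : ℝ} (hn : 1 < n)
    (h : (lam - 1 / n) ^ 2 = (1 - 1 / n) * (P - 1 / n)) :
    (n - 1) * ((1 - lam) / (n - 1)) ^ 2 + lam ^ 2 = P := by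
  have hn0 : n ≠ 0 := by positivity
  have hn1 : n - 1 ≠ 0 := (sub_pos.2 hn).ne'
  field_simp at h ⊢
  exact mul_left_cancel₀ hn0 (by linear_combination h)

/-- For every probability vector `p` in dimension `d ≥ 2` with purity
`∑ pᵢ² = P`, where `1/d ≤ P ≤ 1`, the Shannon entropy `−∑ pᵢ ln pᵢ` is at most
`−[(1 − λ) ln((1 − λ)/(d − 1)) + λ ln λ]`, with `λ = 1/d + √((1 − 1/d)(P − 1/d))`. -/
theorem entropy_upper_bound_at_fixed_purity
    (d : ℕ) (hd : 2 ≤ d) (P : ℝ)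
    (hPlow : 1 / (d : ℝ) ≤ P) (hPhigh : P ≤ 1)
    (lam : ℝ)
    (hlam : lam = 1 / (d : ℝ) + Real.sqrt ((1 - 1 / (d : ℝ)) * (P - 1 / (d : ℝ))))
    (p : Fin d → ℝ) (hp0 : ∀ i, 0 ≤ p i) (hpsum : ∑ i, p i = 1)
    (hpur : ∑ i, (p i) ^ 2 = P) :
    -(∑ i, p i * Real.log (p i)) ≤
      -((1 - lam) * Real.log ((1 - lam) / ((d : ℝ) - 1)) + lam * Real.log lam) := by
  have hd1 : (1 : ℝ) < d := by exact_mod_cast hd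
  have hd' : (0 : ℝ) < 1 - 1 / d := by rw [sub_pos, div_lt_one (by linarith)]; exact hd1
  have hlam_sq : (lam - 1 / d) ^ 2 = (1 - 1 / d) * (P - 1 / d) := by
    rw [hlam, add_sub_cancel_left, sq_sqrt (mul_nonneg hd'.le (sub_nonneg.2 hPlow))]
  have hlam_ge : 1 / (d : ℝ) ≤ lam := hlam ▸ le_add_of_nonneg_right (sqrt_nonneg _)
  have hp_le : ∀ i, p i ≤ lam := fun i => by
    simpa [hlam, hpur] using le_inv_card_add_sqrt_of_sum_eq_one hpsum i
  have hentropy : -(∑ i, p i * log (p i)) = ∑ i, negMulLog (p i) := by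
    simp [negMulLog, sum_neg_distrib]
  rcases hPhigh.lt_or_eq with hP1 | rfl
  · obtain ⟨μ, hμ_def⟩ : ∃ μ, (1 - lam) / (d - 1) = μ := ⟨_, rfl⟩
    have hmass : 1 - lam = (d - 1) * μ := by
      rw [← hμ_def, mul_div_cancel₀ _ (sub_pos.2 hd1).ne']
    have hlam_lt : lam < 1 := by nlinarith
    have hμlam : μ ≤ lam := by
      rw [← hμ_def, div_le_iff₀ (sub_pos.2 hd1)]
      linarith [(div_le_iff₀ (by linarith : (0 : ℝ) < d)).1 hlam_ge]
    have hbound := sum_negMulLog_le_of_sum_eq_of_sum_sq_eq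
      (hμ_def ▸ div_pos (sub_pos.2 hlam_lt) (sub_pos.2 hd1)) hμlam hp0 hp_le
      (by simp only [Fintype.card_fin, hpsum]; linarith)
      (by rw [Fintype.card_fin, hpur, ← hμ_def, sub_one_mul_div_sq_add_sq_eq hd1 hlam_sq])
    rw [hentropy, hμ_def, hmass]
    refine hbound.trans_eq ?_
    simp only [Fintype.card_fin, negMulLog]
    ring
  · have hlam1 : lam = 1 := by nlinarith
    rw [hentropy, sum_negMulLog_eq_zero_of_sum_sq_eq_one hp0 hpsum hpur, hlam1]
    simp
end

section
/- Let d ≥ 2 and 1/d ≤ P ≤ 1, and set λ = 1/d + √((1 − 1/d)(P − 1/d)). Then the vector in ℝ^d with one entry equal to λ and d − 1 entries equal to (1 − λ)/(d − 1) is a probability vector, has purity λ² + (1 − λ)²/(d − 1) = P, and has Shannon entropy exactly −[(1 − λ) ln((1 − λ)/(d − 1)) + λ ln λ]; hence the maximum of the Shannon entropy over probability vectors in ℝ^d of fixed purity P equals U(P,d). -/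
/-!
Every entry of a probability vector `p` of purity `P` in dimension `d` is at most `λ`, by
Cauchy–Schwarz on the other `d - 1` entries. There is a parabola `q` below `x log x` on `[0, λ]`
that meets it at `μ = (1 - λ)/(d - 1)` and at `λ`: the difference `x log x - q x` vanishes at `μ`
and `λ` and has concave derivative vanishing at `μ`. Since `∑ q (p i)` only depends on `∑ p i`
and `∑ p i ^ 2`, `∑ p i log p i ≥ ∑ q (p i) = ∑ q (v i) = ∑ v i log v i`. For `P = 1` (`μ = 0`)
the entries of `p` are `0` or `1` instead.
-/

open Real Set Finset

section ConcaveSign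

variable {s : Set ℝ} {g : ℝ → ℝ} {a b x : ℝ}

lemma ConcaveOn.nonpos_of_le_of_eq_zero (hg : ConcaveOn ℝ s g) (hx : x ∈ s) (hb : b ∈ s)
    (hab : a < b) (hga : g a = 0) (hgb : g b = 0) (hxa : x ≤ a) : g x ≤ 0 := by
  rcases hxa.eq_or_lt with rfl | hxa
  · exact hga.le
  · have hz : a ∈ openSegment ℝ x b := by rw [openSegment_eq_Ioo (hxa.trans hab)]; exact ⟨hxa, hab⟩
    exact hga ▸ hg.left_le_of_le_right hx hb hz (hga.trans hgb.symm).le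

lemma ConcaveOn.nonpos_of_ge_of_eq_zero (hg : ConcaveOn ℝ s g) (ha : a ∈ s) (hx : x ∈ s)
    (hab : a < b) (hga : g a = 0) (hgb : g b = 0) (hbx : b ≤ x) : g x ≤ 0 := by
  rcases hbx.eq_or_lt with rfl | hbx
  · exact hgb.le
  · have hz : b ∈ openSegment ℝ a x := by rw [openSegment_eq_Ioo (hab.trans hbx)]; exact ⟨hab, hbx⟩
    exact hgb ▸ hg.right_le_of_le_left ha hx hz (hgb.trans hga.symm).le

lemma ConcaveOn.nonneg_of_mem_Icc_of_eq_zero (hg : ConcaveOn ℝ s g) (ha : a ∈ s) (hb : b ∈ s)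
    (hga : g a = 0) (hgb : g b = 0) (hx : x ∈ Icc a b) : 0 ≤ g x := by
  have := hg.ge_on_segment ha hb (by rwa [segment_eq_Icc (hx.1.trans hx.2)])
  rwa [hga, hgb, min_self] at this

end ConcaveSign

/-- By Rolle `g` has a second zero `ρ ∈ (μ, l)`, so `ψ` decreases on `[a, μ]`, increases on
`[μ, ρ]` and decreases on `[ρ, l]`. -/
lemma nonneg_of_concaveOn_deriv {ψ g : ℝ → ℝ} {a μ l x : ℝ} (haμ : a < μ) (hμl : μ < l)
    (hψ : ContinuousOn ψ (Icc a l)) (hψ' : ∀ x ∈ Ioo a l, HasDerivAt ψ (g x) x)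
    (hg : ConcaveOn ℝ (Ioo a l) g) (hgμ : g μ = 0) (hψμ : ψ μ = 0) (hψl : ψ l = 0)
    (hx : x ∈ Icc a l) : 0 ≤ ψ x := by
  have hμ : μ ∈ Ioo a l := ⟨haμ, hμl⟩
  obtain ⟨ρ, hρ, hgρ⟩ := exists_hasDerivAt_eq_zero hμl
    (hψ.mono (Icc_subset_Icc haμ.le le_rfl)) (hψμ.trans hψl.symm)
    (fun y hy => hψ' y ⟨haμ.trans hy.1, hy.2⟩)
  have hρ' : ρ ∈ Ioo a l := ⟨haμ.trans hρ.1, hρ.2⟩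
  have hderiv {u w : ℝ} (hu : a ≤ u) (hw : w ≤ l) :
      ∀ y ∈ interior (Icc u w), HasDerivWithinAt ψ (g y) (interior (Icc u w)) y := by
    rw [interior_Icc]
    exact fun y hy => (hψ' y ⟨hu.trans_lt hy.1, hy.2.trans_le hw⟩).hasDerivWithinAt
  have hcont {u w : ℝ} (hu : a ≤ u) (hw : w ≤ l) : ContinuousOn ψ (Icc u w) :=
    hψ.mono (Icc_subset_Icc hu hw)
  rcases le_or_gt x μ with hxμ | hμx
  · have hanti := antitoneOn_of_hasDerivWithinAt_nonpos (convex_Icc a μ) (hcont le_rfl hμl.le)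
      (hderiv le_rfl hμl.le) (fun y hy => by
        rw [interior_Icc] at hy
        exact hg.nonpos_of_le_of_eq_zero ⟨hy.1, hy.2.trans hμl⟩ hρ' hρ.1 hgμ hgρ hy.2.le)
    exact hψμ ▸ hanti ⟨hx.1, hxμ⟩ ⟨haμ.le, le_rfl⟩ hxμ
  rcases le_or_gt x ρ with hxρ | hρx
  · have hmono := monotoneOn_of_hasDerivWithinAt_nonneg (convex_Icc μ ρ)
      (hcont haμ.le hρ.2.le) (hderiv haμ.le hρ.2.le) (fun y hy => by
        rw [interior_Icc] at hy
        exact hg.nonneg_of_mem_Icc_of_eq_zero hμ hρ' hgμ hgρ ⟨hy.1.le, hy.2.le⟩)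
    exact hψμ ▸ hmono ⟨le_rfl, hρ.1.le⟩ ⟨hμx.le, hxρ⟩ hμx.le
  · have hanti := antitoneOn_of_hasDerivWithinAt_nonpos (convex_Icc ρ l)
      (hcont hρ'.1.le le_rfl) (hderiv hρ'.1.le le_rfl) (fun y hy => by
        rw [interior_Icc] at hy
        exact hg.nonpos_of_ge_of_eq_zero hμ ⟨hρ'.1.trans hy.1, hy.2⟩ hρ.1 hgμ hgρ hy.1.le)
    exact hψl ▸ hanti ⟨hρx.le, hx.2⟩ ⟨hρ.2.le, le_rfl⟩ hx.2

lemma quadratic_le_mul_log {μ l c x : ℝ} (hμ : 0 < μ) (hμl : μ < l)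
    (hc : l * log l = μ * log μ + (1 + log μ) * (l - μ) + c * (l - μ) ^ 2) (hx : x ∈ Icc 0 l) :
    μ * log μ + (1 + log μ) * (x - μ) + c * (x - μ) ^ 2 ≤ x * log x := by
  set q : ℝ → ℝ := fun x => μ * log μ + (1 + log μ) * (x - μ) + c * (x - μ) ^ 2
  have hderiv : ∀ y ∈ Ioo 0 l,
      HasDerivAt (fun x => x * log x - q x) (log y - log μ - 2 * c * (y - μ)) y := by
    intro y hy
    have hq : HasDerivAt q ((1 + log μ) * 1 + c * (2 * (y - μ) ^ 1 * 1)) y :=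
      (((hasDerivAt_id y).sub_const μ).const_mul _ |>.const_add _).add
        ((((hasDerivAt_id y).sub_const μ).pow 2).const_mul c)
    exact ((hasDerivAt_mul_log hy.1.ne').sub hq).congr_deriv (by ring)
  have hconcave : ConcaveOn ℝ (Ioo 0 l) fun y => log y - log μ - 2 * c * (y - μ) := by
    have hlin := ((-(2 * c)) • LinearMap.id : ℝ →ₗ[ℝ] ℝ).concaveOn (convex_Ioo 0 l)
    refine ((strictConcaveOn_log_Ioi.concaveOn.subset Ioo_subset_Ioi_self (convex_Ioo 0 l)).add
      hlin |>.add_const (2 * c * μ - log μ)).congr fun y _ => ?_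
    simp only [Pi.add_apply, LinearMap.smul_apply, LinearMap.id_apply, smul_eq_mul]
    ring
  have := nonneg_of_concaveOn_deriv (ψ := fun x => x * log x - q x) hμ hμl
    ((continuous_mul_log.sub (by fun_prop : Continuous q)).continuousOn) hderiv hconcave
    (by simp) (by simp [q]) (by simp only [q]; linarith) hx
  simpa [sub_nonneg] using this

lemma tangent_le_mul_log {μ x : ℝ} (hμ : 0 < μ) (hx : 0 ≤ x) :
    μ * log μ + (1 + log μ) * (x - μ) ≤ x * log x := by
  rcases hx.eq_or_lt with rfl | hx
  · rw [zero_mul]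
    linarith
  · have h := log_le_sub_one_of_pos (div_pos hμ hx)
    rw [log_div hμ.ne' hx.ne', le_sub_iff_add_le, le_div_iff₀ hx] at h
    linear_combination h

lemma exists_quadratic_le_mul_log {μ l : ℝ} (hμ : 0 < μ) (hμl : μ ≤ l) :
    ∃ a b c : ℝ, a + b * μ + c * μ ^ 2 = μ * log μ ∧ a + b * l + c * l ^ 2 = l * log l ∧
      ∀ x ∈ Icc 0 l, a + b * x + c * x ^ 2 ≤ x * log x := by
  rcases hμl.eq_or_lt with rfl | hμl
  · refine ⟨μ * log μ - (1 + log μ) * μ, 1 + log μ, 0, by ring, by ring, fun x hx => ?_⟩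
    linarith [tangent_le_mul_log hμ hx.1]
  · set c := (l * log l - μ * log μ - (1 + log μ) * (l - μ)) / (l - μ) ^ 2
    have hc : l * log l = μ * log μ + (1 + log μ) * (l - μ) + c * (l - μ) ^ 2 := by
      rw [div_mul_cancel₀ _ (pow_ne_zero 2 (sub_pos.2 hμl).ne')]
      ring
    refine ⟨μ * log μ - (1 + log μ) * μ + c * μ ^ 2, 1 + log μ - 2 * c * μ, c, by ring,
      by linear_combination -hc, fun x hx => ?_⟩
    linarith [quadratic_le_mul_log hμ hμl hc hx]

lemma sum_le_sum_of_quadratic_le {ι : Type*} [Fintype ι] {f : ℝ → ℝ} {S : Set ℝ} {a b c : ℝ}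
    (hq : ∀ x ∈ S, a + b * x + c * x ^ 2 ≤ f x) {p v : ι → ℝ} (hp : ∀ i, p i ∈ S)
    (hv : ∀ i, f (v i) = a + b * v i + c * v i ^ 2)
    (h1 : ∑ i, p i = ∑ i, v i) (h2 : ∑ i, p i ^ 2 = ∑ i, v i ^ 2) :
    ∑ i, f (v i) ≤ ∑ i, f (p i) :=
  calc ∑ i, f (v i) = ∑ i, (a + b * v i + c * v i ^ 2) := sum_congr rfl fun i _ => hv i
    _ = ∑ i, (a + b * p i + c * p i ^ 2) := by simp only [sum_add_distrib, ← mul_sum, h1, h2]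
    _ ≤ ∑ i, f (p i) := sum_le_sum fun i _ => hq _ (hp i)

lemma sum_mul_log_le_of_two_valued {ι : Type*} [Fintype ι] {p v : ι → ℝ} {μ l : ℝ}
    (hμ : 0 < μ) (hμl : μ ≤ l) (hv : ∀ i, v i = μ ∨ v i = l) (hp : ∀ i, p i ∈ Icc 0 l)
    (h1 : ∑ i, p i = ∑ i, v i) (h2 : ∑ i, p i ^ 2 = ∑ i, v i ^ 2) :
    ∑ i, v i * log (v i) ≤ ∑ i, p i * log (p i) := by
  obtain ⟨a, b, c, hqμ, hql, hq⟩ := exists_quadratic_le_mul_log hμ hμl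
  refine sum_le_sum_of_quadratic_le (f := fun x => x * log x) hq hp (fun i => ?_) h1 h2
  rcases hv i with h | h <;> rw [h]
  exacts [hqμ.symm, hql.symm]

/-- Cauchy–Schwarz on the remaining entries: `(1 - p i)² ≤ (n - 1) (P - p i²)`. -/
lemma le_inv_card_add_sqrt {ι : Type*} [Fintype ι] {p : ι → ℝ} {P : ℝ}
    (h1 : ∑ j, p j = 1) (h2 : ∑ j, p j ^ 2 = P) (i : ι) :
    p i ≤ 1 / Fintype.card ι + √((1 - 1 / Fintype.card ι) * (P - 1 / Fintype.card ι)) := by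
  classical
  set n : ℝ := (Fintype.card ι : ℝ)
  have hn : 0 < n := Nat.cast_pos.2 (Fintype.card_pos_iff.2 ⟨i⟩)
  have hcs := sq_sum_le_card_mul_sum_sq (s := univ.erase i) (f := p)
  rw [sum_erase_eq_sub (mem_univ i), sum_erase_eq_sub (mem_univ i), h1, h2,
    card_erase_of_mem (mem_univ i), card_univ, Nat.cast_pred (Fintype.card_pos_iff.2 ⟨i⟩)] at hcs
  have hsq : (p i - 1 / n) ^ 2 ≤ (1 - 1 / n) * (P - 1 / n) := by
    have : (1 - 1 / n) * (P - 1 / n) - (p i - 1 / n) ^ 2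
        = ((n - 1) * (P - p i ^ 2) - (1 - p i) ^ 2) / n := by
      field_simp
      ring
    exact sub_nonneg.1 (this ▸ div_nonneg (sub_nonneg.2 hcs) hn.le)
  linarith [le_abs_self (p i - 1 / n), abs_le_sqrt hsq]

lemma sum_mul_log_eq_zero_of_sum_sq_eq_one {ι : Type*} [Fintype ι] {p : ι → ℝ}
    (hp : ∀ i, 0 ≤ p i) (h1 : ∑ i, p i = 1) (h2 : ∑ i, p i ^ 2 = 1) :
    ∑ i, p i * log (p i) = 0 := by
  have hle : ∀ i, p i ≤ 1 := fun i => h1 ▸ single_le_sum (fun j _ => hp j) (mem_univ i)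
  have hsum : ∑ i, p i * (1 - p i) = 0 := by
    simp only [mul_sub, mul_one, ← sq, sum_sub_distrib, h1, h2, sub_self]
  rw [sum_eq_zero_iff_of_nonneg fun i _ => mul_nonneg (hp i) (sub_nonneg.2 (hle i))] at hsum
  refine sum_eq_zero fun i hi => ?_
  rcases mul_eq_zero.1 (hsum i hi) with h | h
  · simp [h]
  · simp [sub_eq_zero.1 h |>.symm]

lemma le_one_of_eq_inv_add_sqrt {n P l : ℝ} (hn : 1 ≤ n) (hP : P ≤ 1)
    (hl : l = 1 / n + √((1 - 1 / n) * (P - 1 / n))) : l ≤ 1 := by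
  have hn' : 1 / n ≤ 1 := (div_le_one (by linarith)).2 hn
  have : √((1 - 1 / n) * (P - 1 / n)) ≤ 1 - 1 / n :=
    calc √((1 - 1 / n) * (P - 1 / n)) ≤ √((1 - 1 / n) * (1 - 1 / n)) := by gcongr
      _ = 1 - 1 / n := sqrt_mul_self (by linarith)
  linarith

lemma sq_add_sq_div_eq_of_eq_inv_add_sqrt {n P l : ℝ} (hn : 1 < n) (hP : 1 / n ≤ P)
    (hl : l = 1 / n + √((1 - 1 / n) * (P - 1 / n))) : l ^ 2 + (1 - l) ^ 2 / (n - 1) = P := by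
  have hn' : 1 / n < 1 := (div_lt_one (by linarith)).2 hn
  have hs := sq_sqrt (mul_nonneg (by linarith : 0 ≤ 1 - 1 / n) (sub_nonneg.2 hP))
  have hn1 : n - 1 ≠ 0 := by linarith
  have hn0 : n ≠ 0 := by linarith
  subst hl
  field_simp
  field_simp at hs
  linear_combination n * hs

lemma Fin.sum_comp_ite_val_eq_zero {d : ℕ} (hd : 0 < d) (f : ℝ → ℝ) (a b : ℝ) :
    ∑ i : Fin d, f (if (i : ℕ) = 0 then a else b) = f a + ((d : ℝ) - 1) * f b := by
  obtain ⟨n, rfl⟩ := Nat.exists_eq_succ_of_ne_zero hd.ne'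
  simp [Fin.sum_univ_succ]

lemma Fin.sum_ite_val_eq_zero_moments {d : ℕ} (hd : 1 < d) {l μ : ℝ}
    (hμ : μ = (1 - l) / ((d : ℝ) - 1)) :
    ∑ i : Fin d, (if (i : ℕ) = 0 then l else μ) = 1 ∧
    ∑ i : Fin d, (if (i : ℕ) = 0 then l else μ) ^ 2 = l ^ 2 + (1 - l) ^ 2 / ((d : ℝ) - 1) ∧
    ∑ i : Fin d, (if (i : ℕ) = 0 then l else μ) * log (if (i : ℕ) = 0 then l else μ)
      = (1 - l) * log μ + l * log l := by
  have hd1 : (d : ℝ) - 1 ≠ 0 := sub_ne_zero.2 (by exact_mod_cast hd.ne')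
  have hμ_mul : ((d : ℝ) - 1) * μ = 1 - l := by rw [hμ, mul_div_cancel₀ _ hd1]
  have hsum := Fin.sum_comp_ite_val_eq_zero (d := d) (by omega) (a := l) (b := μ)
  refine ⟨(hsum fun x => x).trans ?_, (hsum (· ^ 2)).trans ?_, (hsum fun x => x * log x).trans ?_⟩
  · linarith
  · rw [hμ, div_pow]
    field_simp
  · rw [← hμ_mul]
    ring

/-- For `d ≥ 2` and `1/d ≤ P ≤ 1`, the vector in `ℝ^d` with one entry
equal to `λ = 1/d + √((1 − 1/d)(P − 1/d))` and `d − 1` entries equal to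
`(1 − λ)/(d − 1)` is a probability vector, has purity `λ² + (1 − λ)²/(d − 1) = P`,
and has Shannon entropy exactly `−[(1 − λ) ln((1 − λ)/(d − 1)) + λ ln λ]`; hence the
maximum of the Shannon entropy over probability vectors in `ℝ^d` of fixed purity `P`
equals `U(P,d)`. -/
theorem entropy_maximizer_at_fixed_purity
    (d : ℕ) (hd : 2 ≤ d) (P : ℝ)
    (hPlow : 1 / (d : ℝ) ≤ P) (hPhigh : P ≤ 1)
    (lam : ℝ)
    (hlam : lam = 1 / (d : ℝ) + Real.sqrt ((1 - 1 / (d : ℝ)) * (P - 1 / (d : ℝ))))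
    (v : Fin d → ℝ) (hv : v = fun i : Fin d => if (i : ℕ) = 0 then lam else (1 - lam) / ((d : ℝ) - 1)) :
    (∀ i, 0 ≤ v i) ∧ (∑ i, v i = 1) ∧
    (lam ^ 2 + (1 - lam) ^ 2 / ((d : ℝ) - 1) = P) ∧ (∑ i, (v i) ^ 2 = P) ∧
    (-(∑ i, v i * Real.log (v i)) =
      -((1 - lam) * Real.log ((1 - lam) / ((d : ℝ) - 1)) + lam * Real.log lam)) ∧
    IsGreatest { H : ℝ | ∃ p : Fin d → ℝ,
        (∀ i, 0 ≤ p i) ∧ (∑ i, p i = 1) ∧ (∑ i, (p i) ^ 2 = P) ∧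
        H = -(∑ i, p i * Real.log (p i)) }
      (-((1 - lam) * Real.log ((1 - lam) / ((d : ℝ) - 1)) + lam * Real.log lam)) := by
  have hd1 : (1 : ℝ) < d := by exact_mod_cast hd
  have hlam_ge : 1 / (d : ℝ) ≤ lam := hlam ▸ le_add_of_nonneg_right (sqrt_nonneg _)
  have hlam_le : lam ≤ 1 := le_one_of_eq_inv_add_sqrt hd1.le hPhigh hlam
  have hpur := sq_add_sq_div_eq_of_eq_inv_add_sqrt hd1 hPlow hlam
  set μ := (1 - lam) / ((d : ℝ) - 1) with hμ
  have hμ_le : μ ≤ lam := by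
    rw [div_le_iff₀' (by linarith)] at hlam_ge
    rw [hμ, div_le_iff₀ (by linarith)]
    linarith
  have hμ_nonneg : 0 ≤ μ := div_nonneg (by linarith) (by linarith)
  obtain ⟨hv_sum, hv_sq, hv_ent⟩ := Fin.sum_ite_val_eq_zero_moments (by omega) hμ
  rw [hpur] at hv_sq
  subst hv
  have hv_nonneg (i : Fin d) : 0 ≤ if (i : ℕ) = 0 then lam else μ := by
    split_ifs <;> linarith
  refine ⟨hv_nonneg, hv_sum, hpur, hv_sq, congrArg Neg.neg hv_ent,
    ⟨_, hv_nonneg, hv_sum, hv_sq, congrArg Neg.neg hv_ent.symm⟩, ?_⟩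
  rintro _ ⟨p, hp0, hp1, hp2, rfl⟩
  rcases hlam_le.eq_or_lt with rfl | hlam_lt
  · have hP : P = 1 := by rw [← hpur]; ring
    rw [sum_mul_log_eq_zero_of_sum_sq_eq_one hp0 hp1 (hp2.trans hP)]
    simp
  rw [← hv_ent, neg_le_neg_iff]
  have hp_le (i : Fin d) : p i ≤ lam := by
    simpa only [Fintype.card_fin, ← hlam] using le_inv_card_add_sqrt hp1 hp2 i
  exact sum_mul_log_le_of_two_valued (div_pos (by linarith) (by linarith)) hμ_le
    (fun i => by split_ifs; exacts [Or.inr rfl, Or.inl rfl]) (fun i => ⟨hp0 i, hp_le i⟩)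
    (hp1.trans hv_sum.symm) (hp2.trans hv_sq.symm)
end

section
/- For every bipartite density matrix ρ_AB on ℂ^{d_A} ⊗ ℂ^{d_B}, the squashed entanglement is upper-bounded by the entanglement of formation: E_sq(ρ_AB) ≤ E_F(ρ_AB). -/
open scoped Kronecker ComplexOrder

/-- Von Neumann entropy (natural logarithm) of a matrix, via its eigenvalues
(`0` if the matrix is not Hermitian; `Real.log 0 = 0` handles zero eigenvalues). -/
noncomputable def vN {n : Type*} [Fintype n] [DecidableEq n] (ρ : Matrix n n ℂ) : ℝ :=
  if h : ρ.IsHermitian then -∑ i, h.eigenvalues i * Real.log (h.eigenvalues i) else 0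

/-- Partial trace over the second tensor factor. -/
noncomputable def ptraceB {A B : Type*} [Fintype B] (ρ : Matrix (A × B) (A × B) ℂ) :
    Matrix A A ℂ := Matrix.of fun a a' => ∑ b, ρ (a, b) (a', b)

/-- Partial trace over the first tensor factor. -/
noncomputable def ptraceA {A B : Type*} [Fintype A] (ρ : Matrix (A × B) (A × B) ℂ) :
    Matrix B B ℂ := Matrix.of fun b b' => ∑ a, ρ (a, b) (a, b')

/-- Partial trace over the third factor of a tripartite system `A × B × C`. -/
noncomputable def ptraceC3 {A B C : Type*} [Fintype C] (ρ : Matrix (A × B × C) (A × B × C) ℂ) :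
    Matrix (A × B) (A × B) ℂ := Matrix.of fun x y => ∑ c, ρ (x.1, x.2, c) (y.1, y.2, c)

/-- Partial trace over the second factor of a tripartite system `A × B × C`. -/
noncomputable def ptraceB3 {A B C : Type*} [Fintype B] (ρ : Matrix (A × B × C) (A × B × C) ℂ) :
    Matrix (A × C) (A × C) ℂ := Matrix.of fun x y => ∑ b, ρ (x.1, b, x.2) (y.1, b, y.2)

/-- Conditional mutual information `I(A:B|C) = S(ρ_AC) + S(ρ_BC) − S(ρ_ABC) − S(ρ_C)`. -/
noncomputable def condMutualInfo {A B C : Type*} [Fintype A] [DecidableEq A] [Fintype B]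
    [DecidableEq B] [Fintype C] [DecidableEq C]
    (ρ : Matrix (A × B × C) (A × B × C) ℂ) : ℝ :=
  vN (ptraceB3 ρ) + vN (ptraceA ρ) - vN ρ - vN (ptraceA (ptraceA ρ))

/-- Squashed entanglement: `(1/2) inf I(A:B|C)` over all finite-dimensional extensions
`ρ_ABC` (density matrices with `Tr_C ρ_ABC = ρ_AB`). -/
noncomputable def Esq {A B : Type*} [Fintype A] [DecidableEq A] [Fintype B] [DecidableEq B]
    (ρAB : Matrix (A × B) (A × B) ℂ) : ℝ :=
  sInf { x : ℝ | ∃ (dC : ℕ), 1 ≤ dC ∧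
    ∃ ρ : Matrix (A × B × Fin dC) (A × B × Fin dC) ℂ,
      ρ.PosSemidef ∧ ρ.trace = 1 ∧ ptraceC3 ρ = ρAB ∧ x = (1 / 2) * condMutualInfo ρ }

/-- Entanglement of formation: infimum of the average local entropy over finite
pure-state ensembles realizing `ρAB` (entropies in natural logarithm). -/
noncomputable def EoF {A B : Type*} [Fintype A] [DecidableEq A] [Fintype B] [DecidableEq B]
    (ρAB : Matrix (A × B) (A × B) ℂ) : ℝ :=
  sInf { x : ℝ | ∃ (n : ℕ) (p : Fin n → ℝ) (ψ : Fin n → (A × B → ℂ)),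
    (∀ i, 0 ≤ p i) ∧ (∑ i, p i = 1) ∧ (∀ i, ∑ v, ‖ψ i v‖ ^ 2 = 1) ∧
    ρAB = ∑ i, (p i : ℂ) • Matrix.vecMulVec (ψ i) (star (ψ i)) ∧
    x = ∑ i, p i * vN (ptraceB (Matrix.vecMulVec (ψ i) (star (ψ i)))) }

/-!
Extend a pure-state ensemble `ρ_AB = ∑_c p_c |ψ_c⟩⟨ψ_c|` by a classical register,
`ρ_ABC = ∑_c p_c |ψ_c⟩⟨ψ_c| ⊗ |c⟩⟨c|`. Conditioned on `c` the state is pure, and a pure state has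
equal marginal entropies, so `I(A:B|C) = ∑_c p_c I(A:B)_{ψ_c} = 2 ∑_c p_c S(ψ_c^A)`. Hence every
value in the infimum defining `E_F` also occurs in the one defining `E_sq`; the spectral
decomposition of `ρ_AB` shows that the former set is nonempty.
-/

open Matrix Polynomial Real

section Entropy

variable {m n : Type*} [Fintype m] [DecidableEq m] [Fintype n] [DecidableEq n]

lemma vN_eq_sum_negMulLog {A : Matrix m m ℂ} (hA : A.IsHermitian) :
    vN A = ∑ i, negMulLog (hA.eigenvalues i) := by
  simp [vN, hA, negMulLog, Finset.sum_neg_distrib]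

lemma vN_eq_sum_roots_charpoly {A : Matrix m m ℂ} (hA : A.IsHermitian) :
    vN A = (A.charpoly.roots.map fun z => negMulLog z.re).sum := by
  rw [vN_eq_sum_negMulLog hA, hA.roots_charpoly_eq_eigenvalues, Multiset.map_map]
  rfl

/-- Zero eigenvalues carry no entropy. -/
lemma vN_eq_of_X_pow_mul_charpoly_eq {A : Matrix m m ℂ} {B : Matrix n n ℂ}
    (hA : A.IsHermitian) (hB : B.IsHermitian) {a b : ℕ}
    (h : X ^ a * A.charpoly = X ^ b * B.charpoly) : vN A = vN B := by
  have hroots := congrArg (fun q : ℂ[X] => (q.roots.map fun z => negMulLog z.re).sum) h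
  simpa [roots_mul, A.charpoly_monic.ne_zero, B.charpoly_monic.ne_zero, X_ne_zero,
    Multiset.map_nsmul, Multiset.sum_nsmul, ← vN_eq_sum_roots_charpoly hA,
    ← vN_eq_sum_roots_charpoly hB] using hroots

lemma vN_eq_of_charpoly_eq {A : Matrix m m ℂ} {B : Matrix n n ℂ}
    (hA : A.IsHermitian) (hB : B.IsHermitian) (h : A.charpoly = B.charpoly) : vN A = vN B :=
  vN_eq_of_X_pow_mul_charpoly_eq hA hB (a := 0) (b := 0) (by rw [h])

lemma vN_mul_conjTranspose_comm (M : Matrix m n ℂ) : vN (M * Mᴴ) = vN (Mᴴ * M) :=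
  vN_eq_of_X_pow_mul_charpoly_eq (isHermitian_mul_conjTranspose_self M)
    (isHermitian_conjTranspose_mul_self M) (charpoly_mul_comm' M Mᴴ)

lemma vN_transpose {A : Matrix m m ℂ} (hA : A.IsHermitian) : vN Aᵀ = vN A :=
  vN_eq_of_charpoly_eq hA.transpose hA (charpoly_transpose A)

lemma vN_reindex (e : m ≃ n) {A : Matrix m m ℂ} (hA : A.IsHermitian) :
    vN (reindex e e A) = vN A :=
  vN_eq_of_charpoly_eq (hA.submatrix e.symm) hA (charpoly_reindex e A)

lemma vN_diagonal (d : m → ℝ) : vN (diagonal fun i => (d i : ℂ)) = ∑ i, negMulLog (d i) := by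
  rw [vN_eq_sum_roots_charpoly (isHermitian_diagonal_of_self_adjoint _ (by ext; simp)),
    charpoly_diagonal, roots_prod _ _ (by simp [Finset.prod_ne_zero_iff, X_sub_C_ne_zero])]
  simp

lemma charpoly_blockDiagonal {R ι : Type*} [CommRing R] [Fintype ι] [DecidableEq ι]
    (K : ι → Matrix m m R) : (blockDiagonal K).charpoly = ∏ c, (K c).charpoly := by
  have hcharmatrix : charmatrix (blockDiagonal K) = blockDiagonal fun c => charmatrix (K c) := by
    ext ⟨i, c⟩ ⟨j, c'⟩
    by_cases hc : c = c'
    · subst hc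
      by_cases hij : i = j <;> simp [blockDiagonal_apply, hij]
    · simp [blockDiagonal_apply, hc]
  rw [charpoly, hcharmatrix, det_blockDiagonal]
  rfl

lemma vN_blockDiagonal {ι : Type*} [Fintype ι] [DecidableEq ι] {K : ι → Matrix m m ℂ}
    (hK : ∀ c, (K c).IsHermitian) : vN (blockDiagonal K) = ∑ c, vN (K c) := by
  rw [vN_eq_sum_roots_charpoly (isHermitian_blockDiagonal_iff.mpr hK), charpoly_blockDiagonal,
    roots_prod _ _ (Finset.prod_ne_zero_iff.mpr fun c _ => (K c).charpoly_monic.ne_zero),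
    Multiset.map_bind, Multiset.sum_bind, Finset.sum_eq_multiset_sum]
  simp only [vN_eq_sum_roots_charpoly (hK _)]

lemma vN_real_smul {S : Matrix m m ℂ} (hS : S.IsHermitian) (p : ℝ) :
    vN ((p : ℂ) • S) = p * vN S + negMulLog p * S.trace.re := by
  have hpS : ((p : ℂ) • S).IsHermitian := hS.smul (Complex.conj_ofReal p)
  have hcharpoly : ((p : ℂ) • S).charpoly =
      (diagonal fun i => ((p * hS.eigenvalues i : ℝ) : ℂ)).charpoly := by
    conv_lhs => rw [hS.spectral_theorem]
    rw [← map_smul, Unitary.conjStarAlgAut_apply, charpoly_mul_comm, ← mul_assoc]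
    congr 1
    ext i j
    by_cases hij : i = j <;> simp [hij]
  rw [vN_eq_of_charpoly_eq hpS (isHermitian_diagonal_of_self_adjoint _ (by ext; simp)) hcharpoly,
    vN_diagonal, vN_eq_sum_negMulLog hS, hS.trace_eq_sum_eigenvalues]
  simp [negMulLog_mul, Finset.sum_add_distrib, Finset.mul_sum, mul_comm, add_comm]

end Entropy

section PartialTrace

variable {m n : Type*}

lemma trace_ptraceB [Fintype m] [Fintype n] (ρ : Matrix (m × n) (m × n) ℂ) :
    (ptraceB ρ).trace = ρ.trace := by
  simp [trace, ptraceB, Fintype.sum_prod_type]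

lemma trace_ptraceA [Fintype m] [Fintype n] (ρ : Matrix (m × n) (m × n) ℂ) :
    (ptraceA ρ).trace = ρ.trace := by
  simp [trace, ptraceA, Fintype.sum_prod_type, Finset.sum_comm (γ := m)]

lemma ptraceB_smul [Fintype n] (z : ℂ) (ρ : Matrix (m × n) (m × n) ℂ) :
    ptraceB (z • ρ) = z • ptraceB ρ := by
  ext; simp [ptraceB, Finset.mul_sum]

lemma ptraceA_smul [Fintype m] (z : ℂ) (ρ : Matrix (m × n) (m × n) ℂ) :
    ptraceA (z • ρ) = z • ptraceA ρ := by
  ext; simp [ptraceA, Finset.mul_sum]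

lemma isHermitian_ptraceB [Fintype n] {ρ : Matrix (m × n) (m × n) ℂ} (hρ : ρ.IsHermitian) :
    (ptraceB ρ).IsHermitian := by
  ext a a'
  simp only [conjTranspose_apply, ptraceB, of_apply, star_sum, hρ.apply]

lemma isHermitian_ptraceA [Fintype m] {ρ : Matrix (m × n) (m × n) ℂ} (hρ : ρ.IsHermitian) :
    (ptraceA ρ).IsHermitian := by
  ext b b'
  simp only [conjTranspose_apply, ptraceA, of_apply, star_sum, hρ.apply]

lemma ptraceB_vecMulVec_star [Fintype n] (ψ : m × n → ℂ) :
    ptraceB (vecMulVec ψ (star ψ)) = of (Function.curry ψ) * (of (Function.curry ψ))ᴴ := by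
  ext a a'; simp [ptraceB, mul_apply, vecMulVec_apply]

lemma ptraceA_vecMulVec_star [Fintype m] (ψ : m × n → ℂ) :
    ptraceA (vecMulVec ψ (star ψ)) = ((of (Function.curry ψ))ᴴ * of (Function.curry ψ))ᵀ := by
  ext b b'; simp [ptraceA, mul_apply, vecMulVec_apply, mul_comm]

/-- Schmidt decomposition: both marginals of a pure state have the same nonzero spectrum. -/
lemma vN_ptraceA_vecMulVec_star [Fintype m] [DecidableEq m] [Fintype n] [DecidableEq n]
    (ψ : m × n → ℂ) :
    vN (ptraceA (vecMulVec ψ (star ψ))) = vN (ptraceB (vecMulVec ψ (star ψ))) := by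
  rw [ptraceA_vecMulVec_star, ptraceB_vecMulVec_star,
    vN_transpose (isHermitian_conjTranspose_mul_self _), vN_mul_conjTranspose_comm]

lemma star_dotProduct_self_eq [Fintype m] (ψ : m → ℂ) :
    star ψ ⬝ᵥ ψ = ((∑ v, ‖ψ v‖ ^ 2 : ℝ) : ℂ) := by
  simp [dotProduct, Complex.conj_mul']

lemma trace_vecMulVec_star_eq_one [Fintype m] {ψ : m → ℂ} (hψ : ∑ v, ‖ψ v‖ ^ 2 = 1) :
    (vecMulVec ψ (star ψ)).trace = 1 := by
  rw [trace_vecMulVec, dotProduct_comm, star_dotProduct_self_eq, hψ, Complex.ofReal_one]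

lemma vN_vecMulVec_star [Fintype m] [DecidableEq m] (ψ : m → ℂ) :
    vN (vecMulVec ψ (star ψ)) = negMulLog (∑ v, ‖ψ v‖ ^ 2) := by
  have hgram : (replicateCol Unit ψ)ᴴ * replicateCol Unit ψ =
      diagonal fun _ => ((∑ v, ‖ψ v‖ ^ 2 : ℝ) : ℂ) := by
    ext; simp [mul_apply, Complex.conj_mul']
  rw [vecMulVec_eq Unit, ← conjTranspose_replicateCol, vN_mul_conjTranspose_comm, hgram,
    vN_diagonal]
  simp

end PartialTrace

lemma posSemidef_blockDiagonal {m ι : Type*} [Fintype m] [Fintype ι] [DecidableEq ι]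
    {K : ι → Matrix m m ℂ} (hK : ∀ c, (K c).PosSemidef) : (blockDiagonal K).PosSemidef := by
  rw [posSemidef_iff_dotProduct_mulVec]
  refine ⟨isHermitian_blockDiagonal_iff.mpr fun c => (hK c).1, fun x => ?_⟩
  have hblocks : star x ⬝ᵥ (blockDiagonal K *ᵥ x) =
      ∑ c, star (fun i => x (i, c)) ⬝ᵥ (K c *ᵥ fun i => x (i, c)) := by
    simp [dotProduct, mulVec, blockDiagonal_apply, Fintype.sum_prod_type, Finset.mul_sum]
    exact Finset.sum_comm
  rw [hblocks]
  exact Finset.sum_nonneg fun c _ => (hK c).dotProduct_mulVec_nonneg _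

section ClassicalExtension

variable {m n ι : Type*} [DecidableEq ι]

/-- The state `∑_c K_c ⊗ |c⟩⟨c|` on `m × n × ι`, with a classical register `ι`. -/
def classicalExtension (K : ι → Matrix (m × n) (m × n) ℂ) : Matrix (m × n × ι) (m × n × ι) ℂ :=
  reindex (Equiv.prodAssoc m n ι) (Equiv.prodAssoc m n ι) (blockDiagonal K)

lemma classicalExtension_apply (K : ι → Matrix (m × n) (m × n) ℂ) (a a' : m) (b b' : n)
    (c c' : ι) :
    classicalExtension K (a, b, c) (a', b', c') = if c = c' then K c (a, b) (a', b') else 0 := by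
  simp [classicalExtension, blockDiagonal_apply]

lemma ptraceC3_classicalExtension [Fintype ι] (K : ι → Matrix (m × n) (m × n) ℂ) :
    ptraceC3 (classicalExtension K) = ∑ c, K c := by
  ext x y; simp [ptraceC3, classicalExtension_apply, Matrix.sum_apply]

lemma ptraceB3_classicalExtension [Fintype n] (K : ι → Matrix (m × n) (m × n) ℂ) :
    ptraceB3 (classicalExtension K) = blockDiagonal fun c => ptraceB (K c) := by
  ext ⟨a, c⟩ ⟨a', c'⟩
  by_cases hc : c = c' <;>
    simp [ptraceB3, ptraceB, classicalExtension_apply, blockDiagonal_apply, hc]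

lemma ptraceA_classicalExtension [Fintype m] (K : ι → Matrix (m × n) (m × n) ℂ) :
    ptraceA (classicalExtension K) = blockDiagonal fun c => ptraceA (K c) := by
  ext ⟨b, c⟩ ⟨b', c'⟩
  by_cases hc : c = c' <;> simp [ptraceA, classicalExtension_apply, blockDiagonal_apply, hc]

lemma ptraceA_blockDiagonal [Fintype n] (M : ι → Matrix n n ℂ) :
    ptraceA (blockDiagonal M) = diagonal fun c => (M c).trace := by
  ext c c'
  by_cases hc : c = c' <;> simp [ptraceA, blockDiagonal_apply, trace, hc]

variable [Fintype m] [Fintype n] [Fintype ι]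

lemma trace_classicalExtension (K : ι → Matrix (m × n) (m × n) ℂ) :
    (classicalExtension K).trace = ∑ c, (K c).trace := by
  rw [← trace_blockDiagonal, classicalExtension, reindex_apply, trace, trace]
  exact Fintype.sum_equiv (Equiv.prodAssoc m n ι).symm _ _ fun _ => rfl

lemma posSemidef_classicalExtension {K : ι → Matrix (m × n) (m × n) ℂ}
    (hK : ∀ c, (K c).PosSemidef) : (classicalExtension K).PosSemidef :=
  (posSemidef_blockDiagonal hK).submatrix _

variable [DecidableEq m] [DecidableEq n]

lemma vN_classicalExtension {K : ι → Matrix (m × n) (m × n) ℂ} (hK : ∀ c, (K c).IsHermitian) :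
    vN (classicalExtension K) = ∑ c, vN (K c) := by
  rw [classicalExtension, vN_reindex _ (isHermitian_blockDiagonal_iff.mpr hK),
    vN_blockDiagonal hK]

lemma condMutualInfo_classicalExtension {K : ι → Matrix (m × n) (m × n) ℂ}
    (hK : ∀ c, (K c).IsHermitian) {p : ι → ℝ} (hp : ∀ c, (K c).trace = p c) :
    condMutualInfo (classicalExtension K) =
      ∑ c, (vN (ptraceB (K c)) + vN (ptraceA (K c)) - vN (K c)) - ∑ c, negMulLog (p c) := by
  rw [condMutualInfo, ptraceB3_classicalExtension, ptraceA_classicalExtension,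
    ptraceA_blockDiagonal, vN_blockDiagonal fun c => isHermitian_ptraceB (hK c),
    vN_blockDiagonal fun c => isHermitian_ptraceA (hK c), vN_classicalExtension hK]
  simp only [trace_ptraceA, hp]
  rw [vN_diagonal, Finset.sum_sub_distrib, Finset.sum_add_distrib]

end ClassicalExtension

section Ensembles

variable {m n ι : Type*} [Fintype m] [DecidableEq m]

lemma Matrix.IsHermitian.sum_eigenvalues_eq_one {ρ : Matrix m m ℂ} (hρ : ρ.IsHermitian)
    (htr : ρ.trace = 1) : ∑ i, hρ.eigenvalues i = 1 := by
  have h := hρ.trace_eq_sum_eigenvalues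
  rw [htr, ← RCLike.ofReal_sum] at h
  exact Complex.ofReal_eq_one.mp h.symm

lemma vN_nonneg {ρ : Matrix m m ℂ} (hρ : ρ.PosSemidef) (htr : ρ.trace = 1) : 0 ≤ vN ρ := by
  have hsum := hρ.1.sum_eigenvalues_eq_one htr
  rw [vN_eq_sum_negMulLog hρ.1]
  refine Finset.sum_nonneg fun i _ => negMulLog_nonneg (hρ.eigenvalues_nonneg i) ?_
  exact hsum ▸ Finset.single_le_sum (fun j _ => hρ.eigenvalues_nonneg j) (Finset.mem_univ i)

lemma Matrix.IsHermitian.eq_sum_eigenvalues_smul_vecMulVec {A : Matrix m m ℂ}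
    (hA : A.IsHermitian) :
    A = ∑ i, (hA.eigenvalues i : ℂ) •
      vecMulVec (hA.eigenvectorBasis i) (star (hA.eigenvectorBasis i)) := by
  conv_lhs => rw [hA.spectral_theorem]
  ext x y
  rw [Unitary.conjStarAlgAut_apply, mul_apply, Matrix.sum_apply]
  refine Finset.sum_congr rfl fun j _ => ?_
  simp [mul_diagonal, vecMulVec_apply]
  ring

lemma exists_pure_ensemble {ρ : Matrix m m ℂ} (hρ : ρ.PosSemidef) (htr : ρ.trace = 1) :
    ∃ (k : ℕ) (p : Fin k → ℝ) (ψ : Fin k → m → ℂ), (∀ i, 0 ≤ p i) ∧ ∑ i, p i = 1 ∧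
      (∀ i, ∑ v, ‖ψ i v‖ ^ 2 = 1) ∧ ρ = ∑ i, (p i : ℂ) • vecMulVec (ψ i) (star (ψ i)) := by
  let e := (Fintype.equivFin m).symm
  refine ⟨Fintype.card m, fun i => hρ.1.eigenvalues (e i), fun i => hρ.1.eigenvectorBasis (e i),
    fun i => hρ.eigenvalues_nonneg _, ?_, fun i => ?_, ?_⟩
  · rw [e.sum_comp (fun i => hρ.1.eigenvalues i), hρ.1.sum_eigenvalues_eq_one htr]
  · rw [← EuclideanSpace.norm_sq_eq, hρ.1.eigenvectorBasis.orthonormal.1, one_pow]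
  · rw [e.sum_comp (fun i => (hρ.1.eigenvalues i : ℂ) •
      vecMulVec (hρ.1.eigenvectorBasis i) (star (hρ.1.eigenvectorBasis i)))]
    exact hρ.1.eq_sum_eigenvalues_smul_vecMulVec

variable [Fintype n] [DecidableEq n] [Fintype ι] [DecidableEq ι]

lemma condMutualInfo_classicalExtension_pure (p : ι → ℝ) (ψ : ι → m × n → ℂ)
    (hψ : ∀ c, ∑ v, ‖ψ c v‖ ^ 2 = 1) :
    condMutualInfo (classicalExtension fun c => (p c : ℂ) • vecMulVec (ψ c) (star (ψ c))) =
      2 * ∑ c, p c * vN (ptraceB (vecMulVec (ψ c) (star (ψ c)))) := by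
  have hpure c : (vecMulVec (ψ c) (star (ψ c))).IsHermitian :=
    (posSemidef_vecMulVec_self_star _).1
  have htr c : (vecMulVec (ψ c) (star (ψ c))).trace = 1 := trace_vecMulVec_star_eq_one (hψ c)
  have hblock c : vN (ptraceB ((p c : ℂ) • vecMulVec (ψ c) (star (ψ c)))) +
      vN (ptraceA ((p c : ℂ) • vecMulVec (ψ c) (star (ψ c)))) -
      vN ((p c : ℂ) • vecMulVec (ψ c) (star (ψ c))) =
      2 * (p c * vN (ptraceB (vecMulVec (ψ c) (star (ψ c))))) + negMulLog (p c) := by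
    rw [ptraceB_smul, ptraceA_smul, vN_real_smul (hpure c),
      vN_real_smul (isHermitian_ptraceB (hpure c)), vN_real_smul (isHermitian_ptraceA (hpure c)),
      trace_ptraceB, trace_ptraceA, htr c, vN_vecMulVec_star, hψ c, vN_ptraceA_vecMulVec_star]
    simp only [negMulLog_one, Complex.one_re]
    ring
  rw [condMutualInfo_classicalExtension (fun c => (hpure c).smul (Complex.conj_ofReal (p c)))
    (p := p) (fun c => by rw [trace_smul, htr c, smul_eq_mul, mul_one])]
  simp only [hblock, Finset.sum_add_distrib, ← Finset.mul_sum]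
  ring

end Ensembles

/-- `sInf` of a set of reals that is not bounded below is `0`, hence the nonnegativity of `t`. -/
lemma Real.sInf_le_sInf_of_subset_of_nonneg {s t : Set ℝ} (hts : t ⊆ s) (ht : t.Nonempty)
    (ht₀ : ∀ x ∈ t, 0 ≤ x) : sInf s ≤ sInf t := by
  by_cases hs : BddBelow s
  · exact csInf_le_csInf hs ht hts
  · rw [Real.sInf_of_not_bddBelow hs]
    exact Real.sInf_nonneg ht₀

/-- for every bipartite density matrix, the squashed entanglement is
upper-bounded by the entanglement of formation: `E_sq(ρ_AB) ≤ E_F(ρ_AB)`. -/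
theorem squashed_le_formation
    (dA dB : ℕ)
    (ρAB : Matrix (Fin dA × Fin dB) (Fin dA × Fin dB) ℂ)
    (hρ : ρAB.PosSemidef) (htr : ρAB.trace = 1) :
    Esq ρAB ≤ EoF ρAB := by
  refine Real.sInf_le_sInf_of_subset_of_nonneg ?_ ?_ ?_
  · rintro x ⟨k, p, ψ, hp, hp₁, hψ, rfl, rfl⟩
    have hk : 1 ≤ k := Nat.pos_of_ne_zero (by rintro rfl; simp at hp₁)
    refine ⟨k, hk, classicalExtension fun c => (p c : ℂ) • vecMulVec (ψ c) (star (ψ c)),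
      posSemidef_classicalExtension fun c =>
        (posSemidef_vecMulVec_self_star _).smul (Complex.zero_le_real.mpr (hp c)),
      ?_, ptraceC3_classicalExtension _, ?_⟩
    · simp [trace_classicalExtension, trace_vecMulVec_star_eq_one (hψ _), ← Complex.ofReal_sum,
        hp₁]
    · rw [condMutualInfo_classicalExtension_pure p ψ hψ]
      ring
  · obtain ⟨k, p, ψ, hp, hp₁, hψ, hρψ⟩ := exists_pure_ensemble hρ htr
    exact ⟨_, k, p, ψ, hp, hp₁, hψ, hρψ, rfl⟩
  · rintro x ⟨k, p, ψ, hp, -, hψ, -, rfl⟩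
    refine Finset.sum_nonneg fun i _ => mul_nonneg (hp i) (vN_nonneg ?_ ?_)
    · rw [ptraceB_vecMulVec_star]
      exact posSemidef_self_mul_conjTranspose _
    · rw [trace_ptraceB, trace_vecMulVec_star_eq_one (hψ i)]
end
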